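/- arXiv:2509.09895 — 9 statements merged into one kernel-verified Lean document; each statement's English description precedes it below -/
import Mathlib

section
/- Let G be a graph and S ⊆ V(G). If for every connected component C of G − S the neighborhood N_G(V(C)) is a proper subset of S, then there exists a rooted tree-decomposition (T, X) of G whose root bag equals S such that every node t with |X_t| ≥ |S| + 1 is a non-root leaf whose parent p satisfies |X_p| ≤ |S| − 1. -/
open SimpleGraph

/-- A tree-decomposition of the graph `G` over the tree `τ` with bags `X`. -/
structure IsTreeDecomp {V : Type} {T : Type} (G : SimpleGraph V) (τ : SimpleGraph T)
    (X : T → Set V) : Prop where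
  isTree : τ.IsTree
  coverV : ∀ v : V, ∃ t, v ∈ X t
  coverE : ∀ ⦃u v : V⦄, G.Adj u v → ∃ t, u ∈ X t ∧ v ∈ X t
  subtreeConn : ∀ v : V, (τ.induce {t | v ∈ X t}).Connected

/-- The graph `G` has tree-width at most `w`. -/
def TreewidthAtMost {V : Type} (G : SimpleGraph V) (w : ℤ) : Prop :=
  ∃ (T : Type) (τ : SimpleGraph T) (X : T → Set V),
    IsTreeDecomp G τ X ∧ ∀ t, ((X t).ncard : ℤ) ≤ w + 1

/-- `H` is a minor of `G`: there is a family of nonempty, pairwise disjoint, connected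
branch sets in `G`, one for each vertex of `H`, with edges of `H` realized by edges of `G`. -/
def IsMinorOf {W V : Type} (H : SimpleGraph W) (G : SimpleGraph V) : Prop :=
  ∃ f : W → Set V, (∀ w, (f w).Nonempty) ∧ (∀ w, (G.induce (f w)).Connected) ∧
    (Pairwise fun w₁ w₂ => Disjoint (f w₁) (f w₂)) ∧
    ∀ ⦃w₁ w₂⦄, H.Adj w₁ w₂ → ∃ u ∈ f w₁, ∃ x ∈ f w₂, G.Adj u x

/-- `F⁺`: the graph obtained from `F` by adding a new apex vertex adjacent to all of `F`. -/
def addApex {α : Type} (F : SimpleGraph α) : SimpleGraph (Option α) :=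
  SimpleGraph.fromRel (fun a b => (a = none ∧ b ≠ none) ∨
    ∃ x y, a = some x ∧ b = some y ∧ F.Adj x y)

/-- The neighbourhood `N_G(X)` of a vertex set `X`. -/
def nbhd {V : Type} (G : SimpleGraph V) (X : Set V) : Set V :=
  {v | v ∉ X ∧ ∃ u ∈ X, G.Adj u v}

/-! The decomposition is an explicit octopus: a root with bag `S` and, for every component `C`
of `G - S`, a path from the root through a wrist with bag `N(C)` to a leaf with bag `C ∪ N(C)`.
Since `N(C) ⊆ S`, the bags containing a vertex of `S` form a subtree through the root, and a vertex
of `C` lies only in the leaf of `C`. Only the leaves can have more than `|S|` vertices, and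
`N(C) ⊊ S` makes their wrists small. -/

namespace SimpleGraph

section ParentGraph

variable {T : Type*} (root : T) (parent : T → T)

def parentGraph : SimpleGraph T := fromRel fun a b => a ≠ root ∧ parent a = b

variable {root parent}

lemma parentGraph_adj {a b : T} : (parentGraph root parent).Adj a b ↔
    a ≠ b ∧ ((a ≠ root ∧ parent a = b) ∨ (b ≠ root ∧ parent b = a)) :=
  fromRel_adj _ _ _

lemma parentGraph_adj_parent {t : T} (ht : t ≠ root) (hne : t ≠ parent t) :
    (parentGraph root parent).Adj t (parent t) :=
  parentGraph_adj.2 ⟨hne, .inl ⟨ht, rfl⟩⟩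

variable (rank : T → ℕ) (hrank : ∀ t, t ≠ root → rank (parent t) < rank t)
include hrank

lemma connected_induce_parentGraph {A : Set T} (hroot : root ∈ A)
    (hA : ∀ t ∈ A, t ≠ root → parent t ∈ A) :
    ((parentGraph root parent).induce A).Connected := by
  have hreach : ∀ t (ht : t ∈ A),
      ((parentGraph root parent).induce A).Reachable ⟨t, ht⟩ ⟨root, hroot⟩ := by
    intro t
    induction t using (measure rank).wf.induction with
    | _ t ih =>
      intro ht
      by_cases htr : t = root
      · subst htr; rfl
      · have hlt := hrank t htr
        have hadj : ((parentGraph root parent).induce A).Adj ⟨t, ht⟩ ⟨parent t, hA t ht htr⟩ :=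
          parentGraph_adj_parent htr fun h => hlt.ne (congrArg rank h).symm
        exact hadj.reachable.trans (ih _ hlt _)
  exact (connected_iff_exists_forall_reachable _).2
    ⟨⟨root, hroot⟩, fun ⟨t, ht⟩ => (hreach t ht).symm⟩

lemma isTree_parentGraph : (parentGraph root parent).IsTree where
  connected := (induceUnivIso _).connected_iff.1 <|
    connected_induce_parentGraph rank hrank (Set.mem_univ _) fun _ _ _ => Set.mem_univ _
  -- A vertex of maximal rank on a cycle has two cycle-neighbours, but both must be its parent.
  isAcyclic := by
    classical
    intro v c hc
    obtain ⟨m, hm, hmax⟩ := c.support.toFinset.exists_max_image rank ⟨v, by simp⟩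
    rw [List.mem_toFinset] at hm
    have hsub : c.toSubgraph.neighborSet m ⊆ {parent m} := by
      intro x hx
      have hxc : x ∈ c.support := c.mem_verts_toSubgraph.1 hx.snd_mem
      rcases (parentGraph_adj.1 hx.adj_sub).2 with ⟨-, h⟩ | ⟨hxr, h⟩
      · exact h.symm
      · have := hmax x (List.mem_toFinset.2 hxc)
        have := h ▸ hrank x hxr
        omega
    have := Set.ncard_le_ncard hsub
    rw [hc.ncard_neighborSet_toSubgraph_eq_two hm, Set.ncard_singleton] at this
    omega

end ParentGraph

section Components

variable {V : Type} {G : SimpleGraph V} {S : Set V}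

lemma mem_image_supp_connectedComponentMk {v : V} (hv : v ∉ S) :
    v ∈ Subtype.val '' ((G.induce Sᶜ).connectedComponentMk ⟨v, hv⟩).supp :=
  ⟨_, rfl, rfl⟩

lemma eq_connectedComponentMk_of_mem_image_supp {v : V} (hv : v ∉ S)
    {c : (G.induce Sᶜ).ConnectedComponent} (h : v ∈ Subtype.val '' c.supp) :
    c = (G.induce Sᶜ).connectedComponentMk ⟨v, hv⟩ := by
  obtain ⟨x, hx, rfl⟩ := h
  exact hx.symm

lemma nbhd_image_supp_subset (c : (G.induce Sᶜ).ConnectedComponent) :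
    nbhd G (Subtype.val '' c.supp) ⊆ S := by
  rintro v ⟨hvc, u, ⟨x, hx, rfl⟩, hxv⟩
  by_contra hv
  refine hvc ⟨⟨v, hv⟩, ?_, rfl⟩
  rw [ConnectedComponent.mem_supp_iff, ← hx]
  exact ConnectedComponent.sound (Adj.reachable (by simpa using hxv.symm))

lemma mem_union_nbhd_of_adj {X : Set V} {u v : V} (hu : u ∈ X) (huv : G.Adj u v) :
    v ∈ X ∪ nbhd G X := by
  by_cases hv : v ∈ X
  · exact .inl hv
  · exact .inr ⟨hv, u, hu, huv⟩

end Components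

end SimpleGraph

namespace Octopus

open SimpleGraph

variable {α : Type}

def parent : Option (α × Bool) → Option (α × Bool)
  | some (c, true) => some (c, false)
  | _ => none

def height : Option (α × Bool) → ℕ
  | none => 0
  | some (_, false) => 1
  | some (_, true) => 2

variable (α) in
def tree : SimpleGraph (Option (α × Bool)) := parentGraph none parent

lemma height_parent_lt : ∀ t : Option (α × Bool), t ≠ none → height (parent t) < height t := by
  rintro (_ | ⟨c, _ | _⟩) h <;> simp_all [parent, height]

lemma isTree_tree : (tree α).IsTree :=
  isTree_parentGraph height height_parent_lt

lemma tree_adj_leaf (c : α) : (tree α).Adj (some (c, true)) (some (c, false)) :=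
  parentGraph_adj_parent (by simp) (by simp [parent])

lemma eq_of_tree_adj_leaf {c : α} {q : Option (α × Bool)} (h : (tree α).Adj (some (c, true)) q) :
    q = some (c, false) := by
  rcases (parentGraph_adj.1 h).2 with ⟨-, h⟩ | ⟨-, h⟩
  · exact h.symm
  · rcases q with _ | ⟨d, _ | _⟩ <;> simp [parent] at h

variable {V : Type} (G : SimpleGraph V) (S : Set V)

/-- `none` is the root, `some (C, false)` the wrist of `C` and `some (C, true)` its leaf. -/
def bag : Option ((G.induce Sᶜ).ConnectedComponent × Bool) → Set V
  | none => S
  | some (c, false) => nbhd G (Subtype.val '' c.supp)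
  | some (c, true) => (Subtype.val '' c.supp) ∪ nbhd G (Subtype.val '' c.supp)

variable {G S}

lemma bag_subset_of_ne_leaf {t : Option ((G.induce Sᶜ).ConnectedComponent × Bool)}
    (ht : ∀ c, t ≠ some (c, true)) : bag G S t ⊆ S := by
  rcases t with _ | ⟨c, _ | _⟩
  · exact subset_rfl
  · exact nbhd_image_supp_subset c
  · exact absurd rfl (ht c)

lemma mem_bag_parent {v : V} (hv : v ∈ S) {t : Option ((G.induce Sᶜ).ConnectedComponent × Bool)}
    (ht : v ∈ bag G S t) : v ∈ bag G S (parent t) := by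
  rcases t with _ | ⟨c, _ | _⟩
  · exact hv
  · exact hv
  · rcases ht with ⟨⟨x, hx⟩, -, rfl⟩ | ht
    · exact absurd hv hx
    · exact ht

lemma mem_bag_iff_eq_leaf {v : V} (hv : v ∉ S)
    {t : Option ((G.induce Sᶜ).ConnectedComponent × Bool)} :
    v ∈ bag G S t ↔ t = some ((G.induce Sᶜ).connectedComponentMk ⟨v, hv⟩, true) := by
  constructor
  · intro h
    rcases t with _ | ⟨c, _ | _⟩
    · exact absurd h hv
    · exact absurd (nbhd_image_supp_subset c h) hv
    · rcases h with h | h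
      · rw [eq_connectedComponentMk_of_mem_image_supp hv h]
      · exact absurd (nbhd_image_supp_subset c h) hv
  · rintro rfl
    exact .inl (mem_image_supp_connectedComponentMk hv)

lemma adj_mem_bag_leaf {u v : V} (hu : u ∉ S) (huv : G.Adj u v) :
    v ∈ bag G S (some ((G.induce Sᶜ).connectedComponentMk ⟨u, hu⟩, true)) :=
  mem_union_nbhd_of_adj (mem_image_supp_connectedComponentMk hu) huv

variable (G S)

theorem isTreeDecomp : IsTreeDecomp G (tree _) (bag G S) where
  isTree := isTree_tree
  coverV v := by
    by_cases hv : v ∈ S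
    · exact ⟨none, hv⟩
    · exact ⟨_, (mem_bag_iff_eq_leaf hv).2 rfl⟩
  coverE u v huv := by
    by_cases hu : u ∈ S
    · by_cases hv : v ∈ S
      · exact ⟨none, hu, hv⟩
      · exact ⟨_, adj_mem_bag_leaf hv huv.symm, (mem_bag_iff_eq_leaf hv).2 rfl⟩
    · exact ⟨_, (mem_bag_iff_eq_leaf hu).2 rfl, adj_mem_bag_leaf hu huv⟩
  subtreeConn v := by
    by_cases hv : v ∈ S
    · exact connected_induce_parentGraph (A := {t | v ∈ bag G S t}) height height_parent_lt hv
        fun _ ht _ => mem_bag_parent hv ht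
    · have hA : {t | v ∈ bag G S t} = {some ((G.induce Sᶜ).connectedComponentMk ⟨v, hv⟩, true)} :=
        Set.ext fun t => mem_bag_iff_eq_leaf hv
      rw [hA, connected_iff]
      exact ⟨.of_subsingleton, inferInstance⟩

end Octopus

open Octopus in
/-- if every component `C` of `G − S` has `N_G(V(C)) ⊊ S`, then `G` has an
`S`-rooted tree-decomposition in which every node with bag of size ≥ |S|+1 is a non-root
leaf whose parent's bag has size ≤ |S|−1 (i.e. a thin (S,|S|)-octopus). -/
theorem stmt3 {V : Type} [Fintype V] (G : SimpleGraph V) (S : Set V)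
    (h : ∀ c : (G.induce Sᶜ).ConnectedComponent, nbhd G (Subtype.val '' c.supp) ⊂ S) :
    ∃ (T : Type) (τ : SimpleGraph T) (X : T → Set V) (r : T),
      IsTreeDecomp G τ X ∧ X r = S ∧
      ∀ t, S.ncard + 1 ≤ (X t).ncard →
        t ≠ r ∧ ∃ p, τ.Adj t p ∧ (∀ q, τ.Adj t q → q = p) ∧
          ((X p).ncard : ℤ) ≤ (S.ncard : ℤ) - 1 := by
  refine ⟨_, tree _, bag G S, none, isTreeDecomp G S, rfl, fun t ht => ?_⟩
  obtain ⟨c, rfl⟩ : ∃ c, t = some (c, true) := by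
    by_contra! hleaf
    have := Set.ncard_le_ncard (bag_subset_of_ne_leaf hleaf)
    omega
  have hwrist := Set.ncard_lt_ncard (h c)
  exact ⟨by simp, _, tree_adj_leaf c, fun q => eq_of_tree_adj_leaf, by simp only [bag]; omega⟩
end

section
/- Let F be a tree, G a graph not containing F⁺ as a minor, and S ⊆ V(G) with |S| = |V(F)| such that G[S] has a spanning subgraph isomorphic to F. Then no component C of G − S satisfies N_G(V(C)) = S. -/
open SimpleGraph

lemma walk_reach {V : Type} {G : SimpleGraph V} {A : Set V} {u v : V} (p : G.Walk u v)
    (hp : ∀ x ∈ p.support, x ∈ A) :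
    (G.induce A).Reachable ⟨u, hp u p.start_mem_support⟩ ⟨v, hp v p.end_mem_support⟩ := by
  induction p with
  | nil => exact Reachable.refl _
  | @cons a b w h q ih =>
    have h1 : (G.induce A).Adj ⟨a, hp a (by simp)⟩ ⟨b, hp b (by simp)⟩ := h
    exact h1.reachable.trans (ih (fun x hx => hp x (by simp [hx])))

lemma singleton_conn {V : Type} (G : SimpleGraph V) (x : V) : (G.induce {x}).Connected := by
  have : Nonempty ({x} : Set V) := ⟨⟨x, rfl⟩⟩
  refine ⟨fun a b => ?_⟩
  obtain ⟨a, ha⟩ := a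
  obtain ⟨b, hb⟩ := b
  simp only [Set.mem_singleton_iff] at ha hb
  subst ha; subst hb
  exact Reachable.refl _

lemma comp_conn {V : Type} (G : SimpleGraph V) (c : G.ConnectedComponent) :
    (G.induce c.supp).Connected := by
  obtain ⟨v, hv⟩ := c.exists_rep
  have hvs : v ∈ c.supp := by rw [ConnectedComponent.mem_supp_iff, ← hv]; rfl
  have : Nonempty c.supp := ⟨⟨v, hvs⟩⟩
  refine ⟨fun u w => ?_⟩
  obtain ⟨u, hu⟩ := u
  obtain ⟨w, hw⟩ := w
  have hr : G.Reachable u w := by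
    have h2 : G.connectedComponentMk u = G.connectedComponentMk w := by
      simp only [ConnectedComponent.mem_supp_iff] at hu hw
      rw [hu, hw]
    exact ConnectedComponent.eq.1 h2
  classical
  obtain ⟨p⟩ := hr
  have hsub : ∀ x ∈ p.support, x ∈ c.supp := by
    intro x hx
    have h3 : G.Reachable u x := ⟨p.takeUntil x hx⟩
    have h4 : G.connectedComponentMk x = G.connectedComponentMk u :=
      ConnectedComponent.eq.2 h3.symm
    simp only [ConnectedComponent.mem_supp_iff] at hu ⊢
    rw [h4, hu]
  exact walk_reach p hsub

lemma image_supp_conn {V : Type} (G : SimpleGraph V) (S : Set V)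
    (c : (G.induce Sᶜ).ConnectedComponent) :
    (G.induce (Subtype.val '' c.supp)).Connected := by
  have h := comp_conn (G.induce Sᶜ) c
  refine h.map ⟨fun x => ⟨x.1.1, ⟨x.1, x.2, rfl⟩⟩, fun hadj => hadj⟩ ?_
  rintro ⟨v, ⟨x, hx, rfl⟩⟩
  exact ⟨⟨x, hx⟩, rfl⟩

/-- if `G` has no `F⁺` minor, `|S| = |V(F)|`, and `G[S]` has a spanning
subgraph isomorphic to the tree `F`, then no component `C` of `G − S` satisfies
`N_G(V(C)) = S`. -/
theorem stmt5 {VF VG : Type} [Fintype VF] [Fintype VG]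
    (F : SimpleGraph VF) (hF : F.IsTree) (G : SimpleGraph VG)
    (hminor : ¬ IsMinorOf (addApex F) G)
    (S : Set VG) (hcard : S.ncard = Fintype.card VF)
    (φ : VF → VG) (hinj : Function.Injective φ) (hrange : Set.range φ = S)
    (hhom : ∀ ⦃a b : VF⦄, F.Adj a b → G.Adj (φ a) (φ b)) :
    ∀ c : (G.induce Sᶜ).ConnectedComponent, nbhd G (Subtype.val '' c.supp) ≠ S := by
  intro c hc
  apply hminor
  set C : Set VG := Subtype.val '' c.supp with hC
  have hCS : ∀ v ∈ C, v ∉ S := by rintro v ⟨⟨x, hx⟩, _, rfl⟩; exact hx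
  have hφS : ∀ a, φ a ∈ S := fun a => hrange ▸ ⟨a, rfl⟩
  have hnb : ∀ a, φ a ∉ C ∧ ∃ u ∈ C, G.Adj u (φ a) := fun a => by
    have h := hφS a; rw [← hc] at h; exact h
  refine ⟨fun w => Option.rec C (fun x => {φ x}) w, ?_, ?_, ?_, ?_⟩
  · rintro (_ | x)
    · obtain ⟨v, hv⟩ := c.exists_rep
      have hvs : v ∈ c.supp := by rw [ConnectedComponent.mem_supp_iff, ← hv]; rfl
      exact ⟨v.1, ⟨v, hvs, rfl⟩⟩
    · exact ⟨φ x, rfl⟩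
  · rintro (_ | x)
    · exact image_supp_conn G S c
    · exact singleton_conn G (φ x)
  · rintro (_ | x) (_ | y) hxy
    · exact absurd rfl hxy
    · simp only [Set.disjoint_singleton_right]
      exact fun h => hCS _ h (hφS y)
    · simp only [Set.disjoint_singleton_left]
      exact fun h => hCS _ h (hφS x)
    · simp only [Set.disjoint_singleton_left, Set.mem_singleton_iff]
      exact fun h => hxy (congrArg some (hinj h))
  · rintro (_ | x) (_ | y) hxy
    · exact absurd rfl hxy.ne
    · obtain ⟨u, hu, hadj⟩ := (hnb y).2
      exact ⟨u, hu, φ y, rfl, hadj⟩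
    · obtain ⟨u, hu, hadj⟩ := (hnb x).2
      exact ⟨φ x, rfl, u, hu, hadj.symm⟩
    · refine ⟨φ x, rfl, φ y, rfl, ?_⟩
      rw [addApex, SimpleGraph.fromRel_adj] at hxy
      obtain ⟨hne, h | h⟩ := hxy
      · obtain ⟨p, q, hp, hq, hadj⟩ := h.resolve_left (by simp)
        injection hp with hp; injection hq with hq
        subst hp; subst hq
        exact hhom hadj
      · obtain ⟨p, q, hp, hq, hadj⟩ := h.resolve_left (by simp)
        injection hp with hp; injection hq with hq
        subst hp; subst hq
        exact (hhom hadj).symm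
end

section
/- Let (A,B) be a separation of a graph G, let P_1, …, P_m be vertex-disjoint paths from a set S ⊆ A to a set Z ⊆ B where m = |A ∩ B|, so that each P_i meets A ∩ B in exactly one vertex v_i. For a tree-decomposition (T, (X_t)) of G, define X′_t = (X_t ∩ A) ∪ {v_i : X_t ∩ B ∩ V(P_i) ≠ ∅}. Then |X′_t| ≤ |X_t| for every node t. -/
open SimpleGraph

/-- given a separation `(A,B)` of `G`, disjoint paths `P₁,…,P_m`
(`m = |A ∩ B|`) from `S ⊆ A` to `Z ⊆ B` each meeting `A ∩ B` in exactly one vertex `v i`,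
and a tree-decomposition `(T, X)` of `G`, the modified bags
`X′_t = (X_t ∩ A) ∪ {v i : X_t ∩ B ∩ V(P_i) ≠ ∅}` satisfy `|X′_t| ≤ |X_t|`. -/
theorem stmt7 {V T : Type} [Fintype V] (G : SimpleGraph V) (A B S Z : Set V)
    (hsepU : A ∪ B = Set.univ)
    (hsepE : ∀ a ∈ A \ B, ∀ b ∈ B \ A, ¬ G.Adj a b)
    (hS : S ⊆ A) (hZ : Z ⊆ B)
    (m : ℕ) (hm : m = (A ∩ B).ncard)
    (a b : Fin m → V) (p : ∀ i, G.Walk (a i) (b i))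
    (hpath : ∀ i, (p i).IsPath) (ha : ∀ i, a i ∈ S) (hb : ∀ i, b i ∈ Z)
    (hdisj : ∀ i j, i ≠ j → ∀ x ∈ (p i).support, x ∉ (p j).support)
    (v : Fin m → V)
    (hv : ∀ i, {x | x ∈ (p i).support} ∩ (A ∩ B) = {v i})
    (τ : SimpleGraph T) (X : T → Set V) (htd : IsTreeDecomp G τ X) :
    ∀ t, ((X t ∩ A) ∪
        {x | ∃ i, x = v i ∧ (X t ∩ B ∩ {y | y ∈ (p i).support}).Nonempty}).ncard ≤
      (X t).ncard := by
  intro t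
  set X' := (X t ∩ A) ∪
      {x | ∃ i, x = v i ∧ (X t ∩ B ∩ {y | y ∈ (p i).support}).Nonempty} with hX'
  have hvmem : ∀ i, v i ∈ (p i).support ∧ v i ∈ A ∧ v i ∈ B := by
    intro i
    have : v i ∈ {x | x ∈ (p i).support} ∩ (A ∩ B) := by
      rw [hv i]; rfl
    exact ⟨this.1, this.2.1, this.2.2⟩
  have key : ∀ x ∈ X', ∃ w, w ∈ X t ∧
      ((x ∈ X t ∧ w = x) ∨
       (x ∉ X t ∧ w ∉ A ∧ ∃ i, x = v i ∧ w ∈ (p i).support)) := by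
    intro x hx
    by_cases hxt : x ∈ X t
    · exact ⟨x, hxt, Or.inl ⟨hxt, rfl⟩⟩
    · rcases hx with hx | hx
      · exact absurd hx.1 hxt
      · obtain ⟨i, hxi, w, hw⟩ := hx
        have hwA : w ∉ A := by
          intro hwA
          have : w ∈ {x | x ∈ (p i).support} ∩ (A ∩ B) := ⟨hw.2, hwA, hw.1.2⟩
          rw [hv i] at this
          exact hxt (hxi ▸ this ▸ hw.1.1)
        exact ⟨w, hw.1.1, Or.inr ⟨hxt, hwA, i, hxi, hw.2⟩⟩
  choose f hf1 hf2 using key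
  classical
  apply Set.ncard_le_ncard_of_injOn (fun x => if h : x ∈ X' then f x h else x)
  · intro x hx; simp only [dif_pos hx]; exact hf1 x hx
  · intro x hx y hy hxy
    simp only [dif_pos hx, dif_pos hy] at hxy
    have hAx : x ∈ A := by
      rcases hx with h | h
      · exact h.2
      · obtain ⟨i, hxi, _⟩ := h; exact hxi ▸ (hvmem i).2.1
    have hAy : y ∈ A := by
      rcases hy with h | h
      · exact h.2
      · obtain ⟨i, hyi, _⟩ := h; exact hyi ▸ (hvmem i).2.1
    rcases hf2 x hx with ⟨_, hwx⟩ | ⟨_, hwxA, i, hxi, hwxp⟩ <;>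
      rcases hf2 y hy with ⟨_, hwy⟩ | ⟨_, hwyA, j, hyj, hwyp⟩
    · rw [← hwx, ← hwy, hxy]
    · exact absurd (by rw [← hxy, hwx]; exact hAx) hwyA
    · exact absurd (by rw [hxy, hwy]; exact hAy) hwxA
    · have hij : i = j := by
        by_contra hij
        exact hdisj i j hij _ hwxp (hxy ▸ hwyp)
      rw [hxi, hyj, hij]
end

section
/- Let (A,B) be a separation of a graph G with a node z of a tree-decomposition (T, (X_t)) of G satisfying X_z ⊆ B, and let P_1, …, P_m (m = |A∩B|) be vertex-disjoint paths from subsets of A to X_z, each meeting A ∩ B in exactly one vertex v_i. Let T′ be obtained from T by adding a new leaf c adjacent to z, set X′_c = B, and for t ∈ V(T) set X′_t = (X_t ∩ A) ∪ {v_i : X_t ∩ B ∩ V(P_i) ≠ ∅}. Then (T′, (X′_t)) is a tree-decomposition of G. -/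
/-!
Vertices of `A \ B` keep their old subtrees and vertices of `B \ A` live only in the new leaf;
edges inside `A` are covered by old bags and edges inside `B` by the leaf. Disjointness of the
paths and `m = |A ∩ B|` make `v₁, …, v_m` an enumeration of `A ∩ B`. Since `Pᵢ` meets `A ∩ B`
only in `vᵢ`, the separation forces `B ∩ V(Pᵢ)` to be exactly the tail of `Pᵢ` from `vᵢ` to
`X_z`. The nodes whose bags meet a walk form a subtree, so the nodes carrying `vᵢ` are this
subtree (which contains `z`) together with the new leaf adjacent to `z`.
-/

open SimpleGraph

namespace SimpleGraph

variable {V : Type} {G : SimpleGraph V} {A B : Set V}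

structure IsSeparation (G : SimpleGraph V) (A B : Set V) : Prop where
  union_eq : A ∪ B = Set.univ
  not_adj : ∀ a ∈ A \ B, ∀ b ∈ B \ A, ¬ G.Adj a b

namespace IsSeparation

theorem symm (h : G.IsSeparation A B) : G.IsSeparation B A :=
  ⟨Set.union_comm A B ▸ h.union_eq, fun a ha b hb hab => h.not_adj b hb a ha hab.symm⟩

theorem mem_left_of_notMem_right (h : G.IsSeparation A B) {x : V} (hx : x ∉ B) : x ∈ A :=
  ((h.union_eq ▸ Set.mem_univ x : x ∈ A ∪ B)).resolve_right hx

theorem mem_left_of_adj (h : G.IsSeparation A B) {x y : V} (hxy : G.Adj x y) (hy : y ∉ B) :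
    x ∈ A := by
  by_contra hx
  exact h.not_adj y ⟨h.mem_left_of_notMem_right hy, hy⟩ x
    ⟨h.symm.mem_left_of_notMem_right hx, hx⟩ hxy.symm

/-- To leave `B`, a walk has to step from `A ∩ B` into `A \ B`. -/
theorem support_subset_right_of_isPath (h : G.IsSeparation A B) {s e : V} (w : G.Walk s e)
    (hw : w.IsPath) (hs : s ∈ B) (hAB : ∀ x ∈ w.support, x ∈ A → x ∈ B → x = e) :
    ∀ x ∈ w.support, x ∈ B := by
  induction w with
  | nil => simpa using hs
  | @cons u u' e huu' q ih =>
    rw [Walk.cons_isPath_iff] at hw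
    by_cases hu' : u' ∈ B
    · simp only [Walk.support_cons, List.mem_cons, forall_eq_or_imp] at hAB ⊢
      exact ⟨hs, ih hw.1 hu' hAB.2⟩
    · have hue : u = e := hAB u (by simp) (h.mem_left_of_adj huu' hu') hs
      exact absurd (hue ▸ q.end_mem_support) hw.2

theorem support_inter_right_eq_support_dropUntil [DecidableEq V] (h : G.IsSeparation A B)
    {a b v : V} {p : G.Walk a b} (hp : p.IsPath) (ha : a ∈ A) (hb : b ∈ B)
    (hv : {x | x ∈ p.support} ∩ (A ∩ B) = {v}) (hvp : v ∈ p.support) :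
    {x | x ∈ p.support} ∩ B = {x | x ∈ (p.dropUntil v hvp).support} := by
  have honly : ∀ x ∈ p.support, x ∈ A → x ∈ B → x = v := fun x hx hA hB => hv.le ⟨hx, hA, hB⟩
  have hdropB : ∀ x ∈ (p.dropUntil v hvp).support, x ∈ B := by
    simpa using h.support_subset_right_of_isPath _ (hp.dropUntil hvp).reverse hb
      fun x hx => honly x (p.support_dropUntil_subset_support hvp (by simpa using hx))
  have htakeA : ∀ x ∈ (p.takeUntil v hvp).support, x ∈ A :=
    h.symm.support_subset_right_of_isPath _ (hp.takeUntil hvp) ha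
      fun x hx hB hA => honly x (p.support_takeUntil_subset_support hvp hx) hA hB
  ext x
  refine ⟨fun ⟨(hx : x ∈ p.support), hxB⟩ => ?_,
    fun hx => ⟨p.support_dropUntil_subset_support hvp hx, hdropB x hx⟩⟩
  have hx' := hx
  rw [← p.take_spec hvp, Walk.mem_support_append_iff] at hx'
  rcases hx' with htake | hdrop
  · rw [honly x hx (htakeA x htake) hxB]
    exact (p.dropUntil v hvp).start_mem_support
  · exact hdrop

end IsSeparation

variable {W T : Type}

theorem Walk.IsCycle.induce {G : SimpleGraph V} {s : Set V} {u : V} {c : G.Walk u u}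
    (hc : c.IsCycle) (hs : ∀ x ∈ c.support, x ∈ s) : (c.induce s hs).IsCycle := by
  rwa [← Walk.isCycle_map_iff_of_injective (f := (Embedding.induce (G := G) s).toHom)
    (Embedding.induce (G := G) s).injective, Walk.map_induce]

theorem Connected.induce_image {G : SimpleGraph V} {G' : SimpleGraph W} (f : G →g G')
    {s : Set V} (h : (G.induce s).Connected) : (G'.induce (f '' s)).Connected :=
  h.map (induceHom f (Set.mapsTo_image f s)) fun ⟨_, x, hx, hfx⟩ => ⟨⟨x, hx⟩, Subtype.ext hfx⟩

theorem connected_induce_singleton (G : SimpleGraph V) (v : V) : (G.induce {v}).Connected := by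
  rw [induce_singleton_eq_top]
  exact connected_top

def addLeaf (τ : SimpleGraph T) (z : T) : SimpleGraph (Option T) :=
  SimpleGraph.fromRel (fun o o' : Option T =>
    (∃ s t, o = some s ∧ o' = some t ∧ τ.Adj s t) ∨ (o = some z ∧ o' = none))

variable {τ : SimpleGraph T} {z : T}

@[simp]
theorem addLeaf_adj_some_some {s t : T} : (addLeaf τ z).Adj (some s) (some t) ↔ τ.Adj s t := by
  simp only [addLeaf, fromRel_adj, ne_eq, Option.some.injEq, reduceCtorEq, and_false, or_false,
    exists_and_left, exists_eq_left']
  exact ⟨fun ⟨_, h⟩ => h.elim id Adj.symm, fun h => ⟨h.ne, Or.inl h⟩⟩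

@[simp]
theorem addLeaf_adj_none {o : Option T} : (addLeaf τ z).Adj o none ↔ o = some z := by
  cases o <;> simp [addLeaf]

def addLeafEmbedding (τ : SimpleGraph T) (z : T) : τ ↪g addLeaf τ z :=
  ⟨Function.Embedding.some, addLeaf_adj_some_some⟩

/-- A cycle through the leaf would have to leave and re-enter it through two different
neighbours; a cycle avoiding it is a cycle of `τ`. -/
theorem IsAcyclic.addLeaf (h : τ.IsAcyclic) : (addLeaf τ z).IsAcyclic := by
  classical
  intro o c hc
  by_cases hn : none ∈ c.support
  · have hrot := hc.rotate hn
    have hnil := hrot.not_nil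
    apply hrot.snd_ne_penultimate
    rw [addLeaf_adj_none.mp (Walk.adj_snd hnil).symm,
      addLeaf_adj_none.mp (Walk.adj_penultimate hnil)]
  · have hs : ∀ x ∈ c.support, x ∈ Set.range (addLeafEmbedding τ z) := fun x hx =>
      Option.ne_none_iff_exists.mp (ne_of_mem_of_not_mem hx hn)
    exact (Embedding.isoInduceRange (addLeafEmbedding τ z)).isAcyclic_iff.mp h _
      (hc.induce hs)

theorem Connected.addLeaf (h : τ.Connected) : (addLeaf τ z).Connected := by
  rw [connected_iff_exists_forall_reachable]
  refine ⟨none, fun o => ?_⟩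
  cases o with
  | none => rfl
  | some t =>
    exact (addLeaf_adj_none.mpr rfl).reachable.symm.trans
      ((h.preconnected z t).map (addLeafEmbedding τ z).toHom)

theorem IsTree.addLeaf (h : τ.IsTree) : (addLeaf τ z).IsTree :=
  ⟨h.connected.addLeaf, h.isAcyclic.addLeaf⟩

end SimpleGraph

def leafBags {V T : Type} (X : T → Set V) (A B : Set V) (U : V → Set T) : Option T → Set V :=
  fun o => Option.elim o B fun t => X t ∩ A ∪ {x | t ∈ U x}

section leafBags

variable {V T : Type} {X : T → Set V} {A B : Set V} {U : V → Set T}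

@[simp]
theorem mem_leafBags_none {x : V} :
    x ∈ leafBags X A B U none ↔ x ∈ B :=
  Iff.rfl

@[simp]
theorem mem_leafBags_some {x : V} {t : T} :
    x ∈ leafBags X A B U (some t) ↔ x ∈ X t ∧ x ∈ A ∨ t ∈ U x :=
  Iff.rfl

end leafBags

namespace IsTreeDecomp

variable {V T : Type} {G : SimpleGraph V} {τ : SimpleGraph T} {X : T → Set V}

theorem connected_induce_meets_support (h : IsTreeDecomp G τ X) {x y : V} (w : G.Walk x y) :
    (τ.induce {t | (X t ∩ {u | u ∈ w.support}).Nonempty}).Connected := by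
  induction w with
  | @nil u =>
    have hset : {t | (X t ∩ {x | x ∈ (Walk.nil : G.Walk u u).support}).Nonempty} =
        {t | u ∈ X t} := by
      ext t
      simp [Set.Nonempty]
    exact hset ▸ h.subtreeConn u
  | @cons u u' _ huu' q ih =>
    have hset : {t | (X t ∩ {x | x ∈ (Walk.cons huu' q).support}).Nonempty} =
        {t | u ∈ X t} ∪ {t | (X t ∩ {x | x ∈ q.support}).Nonempty} := by
      ext t
      simp [Set.Nonempty, and_or_left, exists_or]
    obtain ⟨t, hut, hu't⟩ := h.coverE huu'
    rw [hset]
    exact induce_union_connected (h.subtreeConn u).preconnected ih.preconnected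
      ⟨t, hut, u', hu't, q.start_mem_support⟩

theorem addLeaf_leafBags (h : IsTreeDecomp G τ X) {A B : Set V} (hsep : G.IsSeparation A B)
    {z : T} {U : V → Set T} (hUAB : ∀ x t, t ∈ U x → x ∈ A ∩ B)
    (hU : ∀ x ∈ A ∩ B, (τ.induce (U x)).Connected) (hzU : ∀ x ∈ A ∩ B, z ∈ U x)
    (hXU : ∀ x ∈ A ∩ B, {t | x ∈ X t} ⊆ U x) :
    IsTreeDecomp G (addLeaf τ z) (leafBags X A B U) where
  isTree := h.isTree.addLeaf
  coverV x := by
    by_cases hxB : x ∈ B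
    · exact ⟨none, hxB⟩
    · obtain ⟨t, hxt⟩ := h.coverV x
      exact ⟨some t, Or.inl ⟨hxt, hsep.mem_left_of_notMem_right hxB⟩⟩
  coverE x y hxy := by
    by_cases hxyB : x ∈ B ∧ y ∈ B
    · exact ⟨none, hxyB⟩
    · obtain ⟨t, hxt, hyt⟩ := h.coverE hxy
      have hxyA : x ∈ A ∧ y ∈ A := by
        rcases not_and_or.mp hxyB with hxB | hyB
        · exact ⟨hsep.mem_left_of_notMem_right hxB, hsep.mem_left_of_adj hxy.symm hxB⟩
        · exact ⟨hsep.mem_left_of_adj hxy hyB, hsep.mem_left_of_notMem_right hyB⟩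
      exact ⟨some t, Or.inl ⟨hxt, hxyA.1⟩, Or.inl ⟨hyt, hxyA.2⟩⟩
  subtreeConn x := by
    have hUx : x ∉ A ∩ B → U x = ∅ := fun hx =>
      Set.eq_empty_of_forall_notMem fun t ht => hx (hUAB x t ht)
    by_cases hxA : x ∈ A
    · by_cases hxB : x ∈ B
      · have hnodes : {o | x ∈ leafBags X A B U o} = {none} ∪ some '' U x := by
          ext (_ | t)
          · simp [hxB]
          · simpa [hxA] using fun hxt => hXU x ⟨hxA, hxB⟩ hxt
        rw [hnodes]
        exact connected_induce_union (connected_induce_singleton _ none).preconnected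
          ((hU x ⟨hxA, hxB⟩).induce_image (addLeafEmbedding τ z).toHom).preconnected
          rfl ⟨z, hzU x ⟨hxA, hxB⟩, rfl⟩ (addLeaf_adj_none.mpr rfl).symm
      · have hnodes : {o | x ∈ leafBags X A B U o} = some '' {t | x ∈ X t} := by
          ext (_ | t)
          · simp [hxB]
          · simp [hxA, hUx fun hx => hxB hx.2]
        rw [hnodes]
        exact (h.subtreeConn x).induce_image (addLeafEmbedding τ z).toHom
    · have hnodes : {o | x ∈ leafBags X A B U o} = {none} := by
        ext (_ | t)
        · simp [hsep.symm.mem_left_of_notMem_right hxA]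
        · simp [hxA, hUx fun hx => hxA hx.1]
      rw [hnodes]
      exact connected_induce_singleton _ none

end IsTreeDecomp

/-- given a separation `(A,B)` of `G`, a node `z` of a tree-decomposition
`(T, X)` with `X_z ⊆ B`, and disjoint paths `P₁,…,P_m` (`m = |A ∩ B|`) from `A` to `X_z`
each meeting `A ∩ B` in exactly one vertex `v i`, the decomposition obtained by adding a
new leaf `c` adjacent to `z` with bag `B` and replacing each bag `X_t` by
`(X_t ∩ A) ∪ {v i : X_t ∩ B ∩ V(P_i) ≠ ∅}` is a tree-decomposition of `G`. -/
theorem stmt8 {V T : Type} [Fintype V] (G : SimpleGraph V) (A B : Set V)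
    (hsepU : A ∪ B = Set.univ)
    (hsepE : ∀ a ∈ A \ B, ∀ b ∈ B \ A, ¬ G.Adj a b)
    (τ : SimpleGraph T) (X : T → Set V) (htd : IsTreeDecomp G τ X)
    (z : T) (hz : X z ⊆ B)
    (m : ℕ) (hm : m = (A ∩ B).ncard)
    (a b : Fin m → V) (p : ∀ i, G.Walk (a i) (b i))
    (hpath : ∀ i, (p i).IsPath) (ha : ∀ i, a i ∈ A) (hb : ∀ i, b i ∈ X z)
    (hdisj : ∀ i j, i ≠ j → ∀ x ∈ (p i).support, x ∉ (p j).support)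
    (v : Fin m → V)
    (hv : ∀ i, {x | x ∈ (p i).support} ∩ (A ∩ B) = {v i}) :
    IsTreeDecomp G
      (SimpleGraph.fromRel (fun o o' : Option T =>
        (∃ s t, o = some s ∧ o' = some t ∧ τ.Adj s t) ∨ (o = some z ∧ o' = none)))
      (fun o : Option T => Option.elim o B (fun t =>
        (X t ∩ A) ∪
          {x | ∃ i, x = v i ∧ (X t ∩ B ∩ {y | y ∈ (p i).support}).Nonempty})) := by
  classical
  have hsep : G.IsSeparation A B := ⟨hsepU, hsepE⟩
  have hvp i : v i ∈ (p i).support := ((hv i).ge rfl).1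
  have hvAB i : v i ∈ A ∩ B := ((hv i).ge rfl).2
  have hvinj : Function.Injective v := fun i j hij =>
    by_contra fun hne => hdisj i j hne _ (hvp i) (hij ▸ hvp j)
  have hrange : Set.range v = A ∩ B :=
    Set.eq_of_subset_of_ncard_le (Set.range_subset_iff.mpr hvAB)
      (by rw [Set.ncard_range_of_injective hvinj, Nat.card_fin, hm]) (Set.toFinite _)
  let U : V → Set T := fun x =>
    {t | ∃ i, x = v i ∧ (X t ∩ B ∩ {y | y ∈ (p i).support}).Nonempty}
  have hUv i :
      U (v i) = {t | (X t ∩ {y | y ∈ ((p i).dropUntil (v i) (hvp i)).support}).Nonempty} := by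
    rw [← hsep.support_inter_right_eq_support_dropUntil (hpath i) (ha i) (hz (hb i)) (hv i)]
    ext t
    simp only [U, hvinj.eq_iff, exists_eq_left', Set.inter_assoc, Set.inter_comm B]
  have hUAB x t : t ∈ U x → x ∈ A ∩ B := fun ⟨i, hi, _⟩ => hi ▸ hvAB i
  have hUconn : ∀ x ∈ A ∩ B, (τ.induce (U x)).Connected := by
    rw [← hrange, Set.forall_mem_range]
    intro i
    rw [hUv]
    exact htd.connected_induce_meets_support _
  have hzU : ∀ x ∈ A ∩ B, z ∈ U x := by
    rw [← hrange, Set.forall_mem_range]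
    exact fun i => ⟨i, rfl, b i, ⟨hb i, hz (hb i)⟩, (p i).end_mem_support⟩
  have hXU : ∀ x ∈ A ∩ B, {t | x ∈ X t} ⊆ U x := by
    rw [← hrange, Set.forall_mem_range]
    exact fun i t hvt => ⟨i, rfl, v i, ⟨hvt, (hvAB i).2⟩, hvp i⟩
  exact htd.addLeaf_leafBags hsep hUAB hUconn hzU hXU
end

section
/- Let G be a 2-connected graph with no k-wheel minor, let C be a cycle (or edge) in G with at most k − 1 vertices, and let M be a connected subgraph of G − V(C′) where C′ is a cycle in G containing V(C) and disjoint from M with N_G(V(M)) ⊆ V(C′). Then |N_G(V(M))| ≤ k − 1. -/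
open SimpleGraph

/-!
Contract `M` to a single apex vertex. Rotate `C′` so that it starts at a neighbour of `M` and
cut it, just before each of `k` chosen neighbours of `M`, into `k` consecutive arcs. Each arc is
a connected set containing a neighbour of `M`, and consecutive arcs (the last and the first
included) are joined by an edge of `C′`, so the arcs together with `M` are the branch sets of a
`k`-wheel minor of `G`. Hence `|N_G(V(M))| ≥ k` is impossible.
-/

structure IsMinorModel {W V : Type} (H : SimpleGraph W) (G : SimpleGraph V) (f : W → Set V) :
    Prop where
  nonempty : ∀ w, (f w).Nonempty
  connected : ∀ w, (G.induce (f w)).Connected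
  pairwise_disjoint : Pairwise fun w₁ w₂ => Disjoint (f w₁) (f w₂)
  exists_adj : ∀ ⦃w₁ w₂⦄, H.Adj w₁ w₂ → ∃ u ∈ f w₁, ∃ x ∈ f w₂, G.Adj u x

theorem Fin.eq_add_one_of_val_sub_eq_one {n : ℕ} {i j : Fin (n + 1)} (h : (j - i).val = 1) :
    j = i + 1 := by
  have : j - i = 1 := Fin.ext <| by
    rw [h, Fin.val_one', Nat.mod_eq_of_lt (by have := (j - i).isLt; omega)]
  rw [← this, add_sub_cancel]

section

variable {W V : Type} {G : SimpleGraph V}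

theorem IsMinorModel.isMinorOf {H : SimpleGraph W} {f : W → Set V} (hf : IsMinorModel H G f) :
    IsMinorOf H G :=
  ⟨f, hf.nonempty, hf.connected, hf.pairwise_disjoint, hf.exists_adj⟩

theorem addApex_adj_some_some {F : SimpleGraph W} {x y : W} :
    (addApex F).Adj (some x) (some y) ↔ F.Adj x y := by
  simp only [addApex, fromRel_adj, ne_eq, Option.some.injEq, reduceCtorEq, false_and, false_or,
    exists_and_left, exists_eq_left']
  exact ⟨fun ⟨_, h⟩ => h.elim id (·.symm), fun h => ⟨h.ne, Or.inl h⟩⟩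

theorem IsMinorModel.addApex {F : SimpleGraph W} {f : W → Set V} (hf : IsMinorModel F G f)
    {M : Set V} (hM : (G.induce M).Connected) (hMf : ∀ w, Disjoint M (f w))
    (hMadj : ∀ w, ∃ u ∈ M, ∃ x ∈ f w, G.Adj u x) :
    IsMinorModel (addApex F) G (fun o => o.elim M f) where
  nonempty
    | none => Set.nonempty_coe_sort.mp hM.nonempty
    | some w => hf.nonempty w
  connected
    | none => hM
    | some w => hf.connected w
  pairwise_disjoint
    | none, none, h => (h rfl).elim
    | none, some w, _ => hMf w
    | some w, none, _ => (hMf w).symm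
    | some _, some _, h => hf.pairwise_disjoint fun e => h (congrArg some e)
  exists_adj
    | none, none, h => (h.ne rfl).elim
    | none, some w, _ => hMadj w
    | some w, none, _ =>
      have ⟨u, hu, x, hx, hux⟩ := hMadj w
      ⟨x, hx, u, hu, hux.symm⟩
    | some _, some _, h => hf.exists_adj (addApex_adj_some_some.mp h)

theorem induce_image_Ico_connected (d : ℕ → V) {a b : ℕ} (hab : a < b)
    (hd : ∀ t, a ≤ t → t + 1 < b → G.Adj (d t) (d (t + 1))) :
    (G.induce (d '' Set.Ico a b)).Connected := by
  induction b, hab using Nat.le_induction with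
  | base =>
    rw [show Set.Ico a (a + 1) = {a} by ext; simp; omega, Set.image_singleton,
      induce_singleton_eq_top]
    exact connected_top
  | succ b hab ih =>
    rw [← Set.insert_Ico_right_eq_Ico_add_one (by omega), Set.image_insert_eq, Set.insert_eq,
      Set.union_comm]
    refine connected_induce_union (ih fun t ht htb => hd t ht (by omega)).preconnected
      (by simp) ⟨b - 1, ⟨by omega, by omega⟩, rfl⟩ rfl ?_
    simpa [show b - 1 + 1 = b by omega] using hd (b - 1) (by omega) (by omega)

namespace SimpleGraph.Walk

variable {u : V} {n : ℕ} {b : Fin (n + 2) → ℕ}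

def arc (c : G.Walk u u) (b : Fin (n + 2) → ℕ) (j : Fin (n + 1)) : Set V :=
  c.getVert '' Set.Ico (b j.castSucc) (b j.succ)

theorem getVert_mem_arc (c : G.Walk u u) (hb : StrictMono b) (j : Fin (n + 1)) :
    c.getVert (b j.castSucc) ∈ c.arc b j :=
  ⟨_, ⟨le_rfl, hb Fin.castSucc_lt_succ⟩, rfl⟩

theorem arc_subset_support (c : G.Walk u u) (b : Fin (n + 2) → ℕ) (j : Fin (n + 1)) :
    c.arc b j ⊆ {v | v ∈ c.support} := by
  rintro _ ⟨t, -, rfl⟩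
  exact c.getVert_mem_support t

theorem connected_induce_arc {c : G.Walk u u} (hb : StrictMono b)
    (hbl : b (Fin.last _) = c.length) (j : Fin (n + 1)) :
    (G.induce (c.arc b j)).Connected := by
  have hle : b j.succ ≤ c.length := hbl ▸ hb.monotone (Fin.le_last _)
  exact induce_image_Ico_connected _ (hb Fin.castSucc_lt_succ) fun _ _ ht =>
    c.adj_getVert_succ (by omega)

theorem exists_adj_arc_add_one {c : G.Walk u u} (hb : StrictMono b) (hb0 : b 0 = 0)
    (hbl : b (Fin.last _) = c.length) (j : Fin (n + 1)) :
    ∃ v ∈ c.arc b j, ∃ x ∈ c.arc b (j + 1), G.Adj v x := by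
  have hlt : b j.castSucc < b j.succ := hb Fin.castSucc_lt_succ
  have hle : b j.succ ≤ c.length := hbl ▸ hb.monotone (Fin.le_last _)
  -- for the last arc `j + 1 = 0`, and this holds because `c` is closed
  have hstart : c.getVert (b j.succ) = c.getVert (b (j + 1).castSucc) := by
    rcases (Fin.le_last j).eq_or_lt with rfl | hj
    · rw [Fin.succ_last, hbl, Fin.last_add_one, Fin.castSucc_zero, hb0, getVert_length,
        getVert_zero]
    · congr 2; ext; simp [Fin.val_add_one_of_lt hj]
  refine ⟨_, ⟨b j.succ - 1, ⟨by omega, by omega⟩, rfl⟩, _, c.getVert_mem_arc hb (j + 1), ?_⟩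
  rw [← hstart]
  simpa [show b j.succ - 1 + 1 = b j.succ by omega] using
    c.adj_getVert_succ (i := b j.succ - 1) (by omega)

theorem IsCycle.isMinorModel_arc {c : G.Walk u u} (hc : c.IsCycle) (hb : StrictMono b)
    (hb0 : b 0 = 0) (hbl : b (Fin.last _) = c.length) :
    IsMinorModel (cycleGraph (n + 1)) G (c.arc b) where
  nonempty j := ⟨_, c.getVert_mem_arc hb j⟩
  connected := connected_induce_arc hb hbl
  pairwise_disjoint := by
    refine (pairwise_disjoint_on _).2 fun j₁ j₂ hj => ?_
    have hle := hb.monotone (Fin.succ_le_castSucc_iff.2 hj)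
    have hsub (j : Fin (n + 1)) :
        Set.Ico (b j.castSucc) (b j.succ) ⊆ {i | i ≤ c.length - 1} := fun t ht => by
      have : b j.succ ≤ c.length := hbl ▸ hb.monotone (Fin.le_last _)
      simp only [Set.mem_Ico, Set.mem_ofPred_eq] at ht ⊢
      omega
    exact (Set.Ico_disjoint_Ico.2 (by omega)).image hc.getVert_injOn' (hsub j₁) (hsub j₂)
  exists_adj j₁ j₂ h := by
    rcases cycleGraph_adj'.1 h with h | h
    · obtain ⟨v, hv, x, hx, hvx⟩ := Fin.eq_add_one_of_val_sub_eq_one h ▸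
        exists_adj_arc_add_one hb hb0 hbl j₂
      exact ⟨x, hx, v, hv, hvx.symm⟩
    · exact Fin.eq_add_one_of_val_sub_eq_one h ▸ exists_adj_arc_add_one hb hb0 hbl j₁

theorem exists_strictMono_getVert_mem (c : G.Walk u u) (hc : 0 < c.length)
    {N : Set V} (hN : N ⊆ {v | v ∈ c.support}) (huN : u ∈ N) (hn : n + 1 ≤ N.ncard) :
    ∃ b : Fin (n + 2) → ℕ, StrictMono b ∧ b 0 = 0 ∧ b (Fin.last _) = c.length ∧
      ∀ j : Fin (n + 1), c.getVert (b j.castSucc) ∈ N := by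
  classical
  set P := (Finset.range c.length).filter (c.getVert · ∈ N)
  have hNP : N ⊆ c.getVert '' P := by
    intro v hv
    obtain ⟨t, rfl, ht⟩ := mem_support_iff_exists_getVert.1 (hN hv)
    rcases ht.lt_or_eq with ht | rfl
    · exact ⟨t, by simp [P, ht, hv], rfl⟩
    · exact ⟨0, by simp [P, hc, huN], by simp⟩
  have hP : n + 1 ≤ P.card := calc
    n + 1 ≤ N.ncard := hn
    _ ≤ (c.getVert '' P).ncard := Set.ncard_le_ncard hNP (P.finite_toSet.image _)
    _ ≤ (P : Set ℕ).ncard := Set.ncard_image_le P.finite_toSet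
    _ = P.card := Set.ncard_coe_finset P
  obtain ⟨T, h0T, hTP, hT⟩ :=
    Finset.exists_subsuperset_card_eq (s := {0}) (by simpa [P, hc] using huN) (by simp) hP
  have hLT : c.length ∉ T := fun h => by simpa [P] using hTP h
  set B := insert c.length T
  have hB : B.card = n + 2 := by rw [Finset.card_insert_of_notMem hLT, hT]
  set b := B.orderEmbOfFin hB
  have hb0 : b 0 = 0 := by
    rw [show (0 : Fin (n + 2)) = ⟨0, by omega⟩ from rfl, Finset.orderEmbOfFin_zero hB (by omega)]
    exact Nat.le_zero.1 <| B.min'_le 0 <| Finset.mem_insert_of_mem <| h0T <|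
      Finset.mem_singleton_self 0
  have hbl : b (Fin.last _) = c.length := by
    rw [show Fin.last (n + 1) = ⟨n + 2 - 1, by omega⟩ from rfl,
      Finset.orderEmbOfFin_last hB (by omega)]
    refine le_antisymm (B.max'_le _ _ fun t ht => ?_) (B.le_max' _ (Finset.mem_insert_self _ _))
    rcases Finset.mem_insert.1 ht with rfl | ht
    · exact le_rfl
    · exact (Finset.mem_range.1 (Finset.mem_filter.1 (hTP ht)).1).le
  refine ⟨b, b.strictMono, hb0, hbl, fun j => ?_⟩
  have hlt : b j.castSucc < c.length := hbl ▸ b.strictMono (Fin.castSucc_lt_last j)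
  rcases Finset.mem_insert.1 (B.orderEmbOfFin_mem hB j.castSucc) with h | h
  · exact absurd h hlt.ne
  · exact (Finset.mem_filter.1 (hTP h)).2

end SimpleGraph.Walk

theorem isMinorOf_addApex_cycleGraph_of_nbhd_subset_support {M : Set V}
    (hM : (G.induce M).Connected) {u : V} {c : G.Walk u u} (hc : c.IsCycle)
    (hMc : Disjoint M {v | v ∈ c.support}) (hN : nbhd G M ⊆ {v | v ∈ c.support}) {n : ℕ}
    (hn : n + 1 ≤ (nbhd G M).ncard) : IsMinorOf (addApex (cycleGraph (n + 1))) G := by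
  classical
  obtain ⟨y, hy⟩ := Set.nonempty_of_ncard_ne_zero (by omega : (nbhd G M).ncard ≠ 0)
  set c' := c.rotate y (hN hy)
  have hc' : c'.IsCycle := hc.rotate _
  have hsupp (v : V) : v ∈ c'.support ↔ v ∈ c.support := c.mem_support_rotate_iff y _
  obtain ⟨b, hb, hb0, hbl, hbN⟩ := c'.exists_strictMono_getVert_mem
    (by have := hc'.three_le_length; omega) (fun v hv => (hsupp v).2 (hN hv)) hy hn
  refine ((hc'.isMinorModel_arc hb hb0 hbl).addApex hM (fun j => ?_) fun j => ?_).isMinorOf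
  · exact hMc.mono_right fun v hv => (hsupp v).1 (c'.arc_subset_support b j hv)
  · obtain ⟨-, w, hw, hwb⟩ := hbN j
    exact ⟨w, hw, _, c'.getVert_mem_arc hb j, hwb⟩

end

theorem stmt12_general (k : ℕ) (hk : 3 ≤ k) {V : Type} (G : SimpleGraph V)
    (hG : ¬ IsMinorOf (addApex (cycleGraph k)) G)
    (x' : V) (C' : G.Walk x' x') (hC' : C'.IsCycle)
    (VM : Set V) (hMconn : (G.induce VM).Connected)
    (hMdisj : VM ∩ {y | y ∈ C'.support} = ∅)
    (hMnbhd : nbhd G VM ⊆ {y | y ∈ C'.support}) :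
    (nbhd G VM).ncard ≤ k - 1 := by
  obtain ⟨n, rfl⟩ : ∃ n, k = n + 1 := ⟨k - 1, by omega⟩
  by_contra! h
  exact hG <| isMinorOf_addApex_cycleGraph_of_nbhd_subset_support hMconn hC'
    (Set.disjoint_iff_inter_eq_empty.2 hMdisj) hMnbhd (by omega)

/-- if `G` is 2-connected with no `k`-wheel minor, `C` is a cycle or edge of
`G` with at most `k−1` vertices, `C′` is a cycle of `G` with `V(C) ⊆ V(C′)`, and `M` is a
connected subgraph of `G` disjoint from `C′` with `N_G(V(M)) ⊆ V(C′)`, then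
`|N_G(V(M))| ≤ k − 1`. -/
theorem stmt12 (k : ℕ) (hk : 3 ≤ k) {V : Type} [Fintype V] (G : SimpleGraph V)
    (h2conn : G.Connected ∧ ∀ x : V, (G.induce {u | u ≠ x}).Connected)
    (hG : ¬ IsMinorOf (addApex (cycleGraph k)) G)
    (Cset : Set V)
    (hC : (∃ u v, G.Adj u v ∧ Cset = {u, v}) ∨
      ∃ (x : V) (wlk : G.Walk x x), wlk.IsCycle ∧ wlk.length ≤ k - 1 ∧
        Cset = {y | y ∈ wlk.support})
    (x' : V) (C' : G.Walk x' x') (hC' : C'.IsCycle)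
    (hCC' : Cset ⊆ {y | y ∈ C'.support})
    (VM : Set V) (hMconn : (G.induce VM).Connected)
    (hMdisj : VM ∩ {y | y ∈ C'.support} = ∅)
    (hMnbhd : nbhd G VM ⊆ {y | y ∈ C'.support}) :
    (nbhd G VM).ncard ≤ k - 1 :=
  stmt12_general k hk G hG x' C' hC' VM hMconn hMdisj hMnbhd
end

section
/- Let G be a connected graph whose cycle space is spanned as follows: C is a cycle in G and P′ is a path between two adjacent vertices v_1, v_c of C internally disjoint from C, with V(G) = V(C) ∪ V(P′), such that every vertex of C − {v_1, v_c} has exactly one neighbor outside C, this neighbor being one of the two ends u_1, u_ℓ of the path P′ − {v_1,v_c} (alternating with parity along C). Then G has a path-decomposition with maximum bag size at most max{|V(C)| + 1, 3}. -/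
open SimpleGraph

/-!
The bags are `V(C) ∪ {u₀}`, then `{v_i : i odd} ∪ {u₀, u_{ℓ-1}}`, then
`{u_{j-1}, u_j, u_{ℓ-1}}` for `j = 1, …, ℓ-1`. Every vertex lies in a run of consecutive bags, so
it suffices to give each vertex its first and last bag and check that adjacent vertices have
overlapping runs: outside `C`, even cycle vertices only see `u₀` and odd ones only `u_{ℓ-1}`,
which stays in every bag but the first.
-/

namespace SimpleGraph

lemma pathGraph_isAcyclic (n : ℕ) : (pathGraph n).IsAcyclic := by
  refine isAcyclic_iff_forall_adj_isBridge.mpr fun x y hxy => ?_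
  wlog hsucc : x.val + 1 = y.val generalizing x y
  · rw [Sym2.eq_swap]
    exact this y x hxy.symm ((pathGraph_adj.mp hxy).resolve_left hsucc)
  rintro ⟨p⟩
  -- `s(x, y)` is the only edge leaving `{t | t ≤ x}`.
  obtain ⟨d, -, hd, hd'⟩ :=
    p.exists_boundary_dart {t | t.val ≤ x.val} (le_refl x.val) (show ¬ y.val ≤ x.val by omega)
  obtain ⟨hdadj, hdne⟩ := (deleteEdges_adj ..).mp d.adj
  simp only [Set.mem_ofPred_eq, not_le] at hd hd'
  have hfst : d.fst = x := Fin.ext (by rw [pathGraph_adj] at hdadj; omega)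
  have hsnd : d.snd = y := Fin.ext (by rw [pathGraph_adj] at hdadj; omega)
  exact hdne (by rw [hfst, hsnd]; rfl)

lemma pathGraph_isTree (n : ℕ) : (pathGraph (n + 1)).IsTree :=
  ⟨pathGraph_connected n, pathGraph_isAcyclic _⟩

lemma pathGraph_induce_interval_connected {m a b : ℕ} (hab : a ≤ b) (hb : b < m) :
    ((pathGraph m).induce {t : Fin m | a ≤ t.val ∧ t.val ≤ b}).Connected := by
  set S := {t : Fin m | a ≤ t.val ∧ t.val ≤ b}
  have hbot : (⟨a, by omega⟩ : Fin m) ∈ S := ⟨le_rfl, hab⟩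
  have hreach : ∀ k (hak : a ≤ k) (hkb : k ≤ b),
      ((pathGraph m).induce S).Reachable ⟨_, hbot⟩ ⟨⟨k, by omega⟩, hak, hkb⟩ := by
    intro k hak
    induction k, hak using Nat.le_induction with
    | base => exact fun _ => .rfl
    | succ k hak ih =>
      intro hkb
      refine (ih (by omega)).trans (Adj.reachable ?_)
      simp [pathGraph_adj]
  have : Nonempty S := ⟨⟨_, hbot⟩⟩
  exact ⟨fun ⟨x, hx⟩ ⟨y, hy⟩ =>
    (hreach x.val hx.1 hx.2).symm.trans (hreach y.val hy.1 hy.2)⟩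

end SimpleGraph

open SimpleGraph

theorem isTreeDecomp_pathGraph_of_intervals {V : Type} (G : SimpleGraph V) (m : ℕ)
    (lo hi : V → ℕ) (hle : ∀ x, lo x ≤ hi x) (hhi : ∀ x, hi x ≤ m)
    (hadj : ∀ x y, G.Adj x y → lo x ≤ hi y) :
    IsTreeDecomp G (pathGraph (m + 1)) (fun t => {x | lo x ≤ t.val ∧ t.val ≤ hi x}) where
  isTree := pathGraph_isTree m
  coverV x := ⟨⟨lo x, by grind⟩, le_rfl, hle x⟩
  coverE x y hxy := by
    have := hadj x y hxy
    have := hadj y x hxy.symm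
    exact ⟨⟨max (lo x) (lo y), by grind⟩, by grind⟩
  subtreeConn x := pathGraph_induce_interval_connected (hle x) (by grind)

lemma Fin.ncard_le_card_of_forall_val_mem {n : ℕ} {B : Set (Fin n)} {s : Finset ℕ}
    (h : ∀ j ∈ B, j.val ∈ s) : B.ncard ≤ s.card := by
  simpa using Set.ncard_le_ncard_of_injOn Fin.val h Fin.val_injective.injOn

lemma Set.ncard_le_ncard_preimage_inl_add_ncard_preimage_inr {α β : Type} (S : Set (α ⊕ β)) :
    S.ncard ≤ (Sum.inl ⁻¹' S).ncard + (Sum.inr ⁻¹' S).ncard := by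
  conv_lhs => rw [← Set.image_preimage_inl_union_image_preimage_inr S]
  refine (Set.ncard_union_le _ _).trans ?_
  rw [Set.ncard_image_of_injective _ Sum.inl_injective,
    Set.ncard_image_of_injective _ Sum.inr_injective]

namespace CycleWithPath

variable {c ℓ : ℕ}

/-- `inl i` stands for the cycle vertex `v i`, `inr j` for the path vertex `u j`. -/
def firstBag : Fin c ⊕ Fin ℓ → ℕ
  | .inl _ => 0
  | .inr j => if j.val = 0 then 0 else if j.val = ℓ - 1 then 1 else j.val + 1

def lastBag : Fin c ⊕ Fin ℓ → ℕ
  | .inl i => i.val % 2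
  | .inr j => if j.val = ℓ - 1 then ℓ else j.val + 2

lemma firstBag_le_lastBag (a : Fin c ⊕ Fin ℓ) : firstBag a ≤ lastBag a := by
  rcases a with i | j
  · exact Nat.zero_le _
  · simp only [firstBag, lastBag]
    split_ifs <;> omega

lemma lastBag_le (hℓ : 1 ≤ ℓ) (a : Fin c ⊕ Fin ℓ) : lastBag a ≤ ℓ := by
  rcases a with i | j
  · have := Nat.mod_lt i.val two_pos
    simp only [lastBag]
    omega
  · have := j.isLt
    simp only [lastBag]
    split_ifs <;> omega

lemma firstBag_inr_le_lastBag_inl {i : Fin c} {j : Fin ℓ}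
    (h : j.val = if i.val % 2 = 0 then 0 else ℓ - 1) :
    firstBag (.inr j : Fin c ⊕ Fin ℓ) ≤ lastBag (.inl i : Fin c ⊕ Fin ℓ) := by
  simp only [firstBag, lastBag]
  split_ifs at h ⊢ <;> omega

lemma firstBag_inr_le_lastBag_inr {j j' : Fin ℓ} (h : j'.val = j.val + 1 ∨ j.val = j'.val + 1) :
    firstBag (.inr j : Fin c ⊕ Fin ℓ) ≤ lastBag (.inr j' : Fin c ⊕ Fin ℓ) := by
  simp only [firstBag, lastBag]
  split_ifs <;> omega

lemma ncard_bag_le (t : ℕ) :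
    {a : Fin c ⊕ Fin ℓ | firstBag a ≤ t ∧ t ≤ lastBag a}.ncard ≤ max (c + 1) 3 := by
  obtain ⟨sC, sP, hC, hP, hcard⟩ : ∃ sC sP : Finset ℕ,
      (∀ i : Fin c, t ≤ lastBag (.inl i : Fin c ⊕ Fin ℓ) → i.val ∈ sC) ∧
      (∀ j : Fin ℓ, firstBag (.inr j : Fin c ⊕ Fin ℓ) ≤ t →
        t ≤ lastBag (.inr j : Fin c ⊕ Fin ℓ) → j.val ∈ sP) ∧
      sC.card + sP.card ≤ max (c + 1) 3 := by
    rcases t with _ | _ | t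
    · refine ⟨Finset.range c, {0}, fun i _ => Finset.mem_range.2 i.isLt, fun j h _ => ?_, ?_⟩
      · simp only [firstBag, Finset.mem_singleton] at h ⊢
        split_ifs at h <;> omega
      · simp
    · refine ⟨Finset.Ico 1 c, {0, ℓ - 1}, fun i h => ?_, fun j h _ => ?_, ?_⟩
      · simp only [lastBag] at h
        exact Finset.mem_Ico.2 ⟨by omega, i.isLt⟩
      · simp only [firstBag, Finset.mem_insert, Finset.mem_singleton] at h ⊢
        split_ifs at h <;> omega
      · have := Finset.card_le_two (a := 0) (b := ℓ - 1)
        simp only [Nat.card_Ico]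
        omega
    · refine ⟨∅, {t, t + 1, ℓ - 1}, fun i h => ?_, fun j h h' => ?_, ?_⟩
      · simp only [lastBag] at h
        omega
      · simp only [firstBag, lastBag, Finset.mem_insert, Finset.mem_singleton] at h h' ⊢
        split_ifs at h h' <;> omega
      · have := Finset.card_le_three (a := t) (b := t + 1) (c := ℓ - 1)
        simp only [Finset.card_empty]
        omega
  calc _ ≤ _ := Set.ncard_le_ncard_preimage_inl_add_ncard_preimage_inr _
    _ ≤ sC.card + sP.card :=
      add_le_add (Fin.ncard_le_card_of_forall_val_mem fun i hi => hC i hi.2)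
        (Fin.ncard_le_card_of_forall_val_mem fun j hj => hP j hj.1 hj.2)
    _ ≤ max (c + 1) 3 := hcard

end CycleWithPath

open CycleWithPath

/-- a connected graph consisting of a cycle `v 0, …, v (c−1)` together with
an attached induced path `u 0, …, u (ℓ−1)` joining the two adjacent cycle vertices
`v 0` and `v (c−1)`, in which each cycle vertex has exactly one neighbour outside the
cycle, namely `u 0` for even-indexed and `u (ℓ−1)` for odd-indexed cycle vertices, has a
path-decomposition with maximum bag size at most `max {c + 1, 3}`. -/
theorem stmt13 {V : Type} (G : SimpleGraph V)
    (c ℓ : ℕ) (hl : 1 ≤ ℓ)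
    (v : Fin c → V) (u : Fin ℓ → V)
    (hvinj : Function.Injective v) (huinj : Function.Injective u)
    (hdisj : ∀ i j, v i ≠ u j)
    (hcover : ∀ x : V, (∃ i, x = v i) ∨ ∃ j, x = u j)
    (hparity : ∀ (i : Fin c) (x : V), (∀ i', x ≠ v i') → G.Adj (v i) x →
      x = if (i : ℕ) % 2 = 0 then u ⟨0, by omega⟩ else u ⟨ℓ - 1, by omega⟩)
    (hinduced : ∀ (j j' : ℕ) (hj : j < ℓ) (hj' : j' < ℓ),
      G.Adj (u ⟨j, hj⟩) (u ⟨j', hj'⟩) → j' = j + 1 ∨ j = j' + 1) :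
    ∃ (m : ℕ) (X : Fin m → Set V),
      IsTreeDecomp G (pathGraph m) X ∧ ∀ t, (X t).ncard ≤ max (c + 1) 3 := by
  let e : Fin c ⊕ Fin ℓ ≃ V := Equiv.ofBijective (Sum.elim v u)
    ⟨hvinj.sumElim huinj hdisj, fun x => (hcover x).elim
      (fun ⟨i, hi⟩ => ⟨.inl i, hi.symm⟩) (fun ⟨j, hj⟩ => ⟨.inr j, hj.symm⟩)⟩
  have hadj : ∀ a b, G.Adj (e a) (e b) → firstBag a ≤ lastBag b := by
    rintro (i | j) (i' | j') h
    · exact Nat.zero_le _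
    · exact Nat.zero_le _
    · apply firstBag_inr_le_lastBag_inl
      have hx := hparity i' (u j) (fun k => (hdisj k j).symm) h.symm
      split_ifs at hx ⊢ <;> exact congrArg Fin.val (huinj hx)
    · exact firstBag_inr_le_lastBag_inr (hinduced j j' j.isLt j'.isLt h)
  refine ⟨ℓ + 1, _, isTreeDecomp_pathGraph_of_intervals G ℓ (firstBag ∘ e.symm)
    (lastBag ∘ e.symm) (fun _ => firstBag_le_lastBag _) (fun _ => lastBag_le hl _)
    (fun x y h => hadj _ _ (by simpa using h)), fun t => ?_⟩
  change (e.symm ⁻¹' {a | firstBag a ≤ t.val ∧ t.val ≤ lastBag a}).ncard ≤ _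
  rw [← e.image_eq_preimage_symm, Set.ncard_image_of_injective _ e.injective]
  exact ncard_bag_le t
end

section
/- Let F′ be a proper subtree of a tree F with uv an edge of F, u ∈ V(F′), v ∉ V(F′), and let F′′ = F′ + uv. Let G be a graph, S ⊆ V(G) such that G[S] has a spanning subgraph isomorphic to F′ via an isomorphism φ, and suppose some component C of G − S satisfies N_G(V(C)) = S. Then there exists a vertex v* ∈ V(G) − S adjacent to φ(u) such that G[S ∪ {v*}] has a spanning subgraph isomorphic to F′′. -/
open SimpleGraph

/-- let `F′ = F[S′]` be a proper subtree of a tree `F`, `uv ∈ E(F)` with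
`u ∈ S′`, `v ∉ S′`, and let `F′′ = F′ + uv`. If `G[S]` has a spanning subgraph isomorphic
to `F′` via `φ` and some component `C` of `G − S` satisfies `N_G(V(C)) = S`, then there is
a vertex `v* ∉ S` adjacent to `φ(u)` such that `G[S ∪ {v*}]` has a spanning subgraph
isomorphic to `F′′`. -/
theorem stmt16 {VF VG : Type} [Fintype VF] [Fintype VG]
    (F : SimpleGraph VF) (hF : F.IsTree)
    (S' : Set VF) (hF' : (F.induce S').IsTree) (hproper : S' ≠ Set.univ)
    (u v : VF) (hu : u ∈ S') (hv : v ∉ S') (huv : F.Adj u v)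
    (G : SimpleGraph VG) (S : Set VG)
    (φ : ↥S' → VG) (hinj : Function.Injective φ) (hrange : Set.range φ = S)
    (hhom : ∀ ⦃a b : ↥S'⦄, (F.induce S').Adj a b → G.Adj (φ a) (φ b))
    (c : (G.induce Sᶜ).ConnectedComponent)
    (hc : nbhd G (Subtype.val '' c.supp) = S) :
    ∃ vstar : VG, vstar ∉ S ∧ G.Adj (φ ⟨u, hu⟩) vstar ∧
      ∃ ψ : ↥(insert v S') → VG, Function.Injective ψ ∧
        Set.range ψ = insert vstar S ∧
        ∀ ⦃a b : ↥(insert v S')⦄, (F.induce (insert v S')).Adj a b → G.Adj (ψ a) (ψ b) := by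
  classical
  -- key: the only neighbour of v inside S' is u
  have key : ∀ w (hw : w ∈ S'), F.Adj v w → w = u := by
    intro w hw hvw
    by_contra hne
    -- path from u to w inside the induced subtree
    obtain ⟨p0⟩ := hF'.isConnected ⟨u, hu⟩ ⟨w, hw⟩
    set p1 : (F.induce S').Path ⟨u, hu⟩ ⟨w, hw⟩ := p0.toPath with hp1
    have hval : Function.Injective ((Embedding.induce (G := F) S').toHom : ↥S' → VF) :=
      (Embedding.induce (G := F) S').injective
    set p' : F.Path u w := p1.map (Embedding.induce (G := F) S').toHom hval with hp'
    have hsupp : ∀ x ∈ (p' : F.Walk u w).support, x ∈ S' := by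
      intro x hx
      have : (p' : F.Walk u w).support =
          ((p1 : (F.induce S').Walk ⟨u, hu⟩ ⟨w, hw⟩).map
            (Embedding.induce (G := F) S').toHom).support := rfl
      rw [this, SimpleGraph.Walk.support_map] at hx
      obtain ⟨y, _, rfl⟩ := List.mem_map.mp hx
      exact y.2
    have hvns : v ∉ (p' : F.Walk u w).support := fun h => hv (hsupp v h)
    have hq2 : (SimpleGraph.Walk.cons huv.symm (p' : F.Walk u w)).IsPath :=
      p'.2.cons hvns
    have huniq := isAcyclic_iff_path_unique.mp hF.IsAcyclic
      (SimpleGraph.Path.singleton hvw) ⟨_, hq2⟩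
    have hsup := congrArg (fun q : F.Path v w => (q : F.Walk v w).support) huniq
    simp only [SimpleGraph.Path.singleton, SimpleGraph.Walk.support_cons] at hsup
    have humem : u ∈ (p' : F.Walk u w).support := SimpleGraph.Walk.start_mem_support _
    have : u ∈ [v, w] := by
      rw [show ([v, w] : List VF) = v :: (SimpleGraph.Walk.cons hvw SimpleGraph.Walk.nil
        : F.Walk v w).support.tail from rfl] at *
      have := hsup ▸ (List.mem_cons_of_mem v humem)
      simpa [SimpleGraph.Walk.support_cons] using this
    have h2 : u = v ∨ u = w := by simpa using this
    rcases h2 with h1 | h1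
    · exact hv (h1 ▸ hu)
    · exact hne h1.symm
  -- find vstar
  have hφu : φ ⟨u, hu⟩ ∈ S := hrange ▸ Set.mem_range_self _
  have hmem : φ ⟨u, hu⟩ ∈ nbhd G (Subtype.val '' c.supp) := by rw [hc]; exact hφu
  obtain ⟨-, x, hxc, hxadj⟩ := hmem
  obtain ⟨y, hy, rfl⟩ := hxc
  have hyns : (y : VG) ∉ S := y.2
  refine ⟨y, hyns, hxadj.symm, ?_⟩
  classical
  set ψ : ↥(insert v S') → VG :=
    fun a => if h : (a : VF) ∈ S' then φ ⟨a, h⟩ else (y : VG) with hψ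
  have hψS' : ∀ (a : ↥(insert v S')) (h : (a : VF) ∈ S'), ψ a = φ ⟨a, h⟩ := by
    intro a h; simp [hψ, h]
  have hψv : ∀ (a : ↥(insert v S')), (a : VF) ∉ S' → ψ a = (y : VG) := by
    intro a h; simp [hψ, h]
  have heqv : ∀ (a : ↥(insert v S')), (a : VF) ∉ S' → (a : VF) = v := by
    intro a h; rcases a.2 with h1 | h1
    · exact h1
    · exact absurd h1 h
  have hφmem : ∀ z : ↥S', φ z ∈ S := fun z => hrange ▸ Set.mem_range_self _
  refine ⟨ψ, ?_, ?_, ?_⟩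
  · intro a b hab
    by_cases ha : (a : VF) ∈ S' <;> by_cases hb : (b : VF) ∈ S'
    · rw [hψS' a ha, hψS' b hb] at hab
      have h2 := congrArg Subtype.val (hinj hab)
      exact Subtype.ext h2
    · rw [hψS' a ha, hψv b hb] at hab
      exact absurd (hab ▸ hφmem ⟨a, ha⟩) hyns
    · rw [hψv a ha, hψS' b hb] at hab
      exact absurd (hab.symm ▸ hφmem ⟨b, hb⟩) hyns
    · exact Subtype.ext ((heqv a ha).trans (heqv b hb).symm)
  · ext x
    constructor
    · rintro ⟨a, rfl⟩
      by_cases ha : (a : VF) ∈ S'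
      · rw [hψS' a ha]; exact Set.mem_insert_of_mem _ (hφmem _)
      · rw [hψv a ha]; exact Set.mem_insert _ _
    · rintro (rfl | hx)
      · exact ⟨⟨v, Set.mem_insert _ _⟩, hψv _ hv⟩
      · obtain ⟨z, rfl⟩ := hrange ▸ hx
        refine ⟨⟨z, Set.mem_insert_of_mem _ z.2⟩, ?_⟩
        rw [hψS' _ z.2]
  · intro a b hab
    have hab' : F.Adj (a : VF) (b : VF) := hab
    by_cases ha : (a : VF) ∈ S' <;> by_cases hb : (b : VF) ∈ S'
    · rw [hψS' a ha, hψS' b hb]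
      exact hhom (show (F.induce S').Adj ⟨a, ha⟩ ⟨b, hb⟩ from hab')
    · have hbv := heqv b hb
      have : (a : VF) = u := key _ ha (by have := hab'.symm; rwa [hbv] at this)
      rw [hψS' a ha, hψv b hb]
      have : φ ⟨(a : VF), ha⟩ = φ ⟨u, hu⟩ := by congr 1; exact Subtype.ext this
      rw [this]; exact hxadj.symm
    · have hav := heqv a ha
      have : (b : VF) = u := key _ hb (by have := hab'; rwa [hav] at this)
      rw [hψv a ha, hψS' b hb]
      have : φ ⟨(b : VF), hb⟩ = φ ⟨u, hu⟩ := by congr 1; exact Subtype.ext this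
      rw [this]; exact hxadj
    · exact absurd (Subtype.ext ((heqv a ha).trans (heqv b hb).symm)) hab.ne
end

section
/- Let k ≥ 3, let G be 2-connected with no k-wheel minor, let C be a cycle or edge of G with vertices v_1, …, v_c where v_1 v_c ∈ E(C), let P′ be a v_1–v_c path internally disjoint from C with |V(P′)| ≥ 3 and V(C) ∪ V(P′) ≠ V(G), chosen to maximize the size of a largest component M of G − (V(C) ∪ V(P′)). Then there is no path Q in G − E(C) between two distinct vertices x, y of P′, internally disjoint from V(C) ∪ V(P′) ∪ V(M), such that some vertex of V(P′ − {v_1,v_c}) ∩ N_G(V(M)) is an internal vertex of the subpath of P′ between x and y. -/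
open SimpleGraph

/-
If such a path `Q` existed, replacing the `x`–`y` segment of `P′` by `Q` would give another
admissible `v₁`–`v_c` path `P″`: it is a path because `Q` meets `P′` only in its ends, its inner
vertices avoid `C`, and it has at least three vertices because `Q` avoids the edge `v₁v_c` of `C`.
`P″` avoids `M` and also the vertex `a ∈ A` strictly between `x` and `y`; as `a` has a neighbour
in `M`, the component of `G − (V(C) ∪ V(P″))` containing `a` contains `V(M) ∪ {a}`,
contradicting the maximality of `|V(M)|`.
-/

namespace SimpleGraph.Walk

variable {V : Type*} {G : SimpleGraph V}

lemma mk_mem_edges_of_length_eq_one {u v : V} {p : G.Walk u v} (hp : p.length = 1) :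
    s(u, v) ∈ p.edges := by
  cases p with
  | nil => simp at hp
  | cons h q =>
    obtain rfl := eq_of_length_eq_zero (by simpa using hp : q.length = 0)
    simp

lemma IsPath.append_of_mem_support {u v w : V} {p : G.Walk u v} {q : G.Walk v w}
    (hp : p.IsPath) (hq : q.IsPath) (hpq : ∀ z ∈ p.support, z ∈ q.support → z = v) :
    (p.append q).IsPath := by
  have hq' := hq.support_nodup
  rw [← q.cons_tail_support, List.nodup_cons] at hq'
  rw [isPath_def, support_append, List.nodup_append]
  refine ⟨hp.support_nodup, hq'.2, fun z hzp z' hzq hzz' => ?_⟩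
  subst hzz'
  obtain rfl := hpq z hzp (List.mem_of_mem_tail hzq)
  exact hq'.1 hzq

variable [DecidableEq V]

lemma idxOf_le_of_mem_support_takeUntil {u v x z : V} (p : G.Walk u v) (hx : x ∈ p.support)
    (hz : z ∈ (p.takeUntil x hx).support) : p.support.idxOf z ≤ p.support.idxOf x := by
  rw [takeUntil_eq_take, support_copy, support_take] at hz
  have := (List.mem_take_iff_idxOf_lt (List.mem_of_mem_take hz)).1 hz
  omega

lemma IsPath.idxOf_le_of_mem_support_dropUntil {u v y z : V} {p : G.Walk u v} (hp : p.IsPath)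
    (hy : y ∈ p.support) (hz : z ∈ (p.dropUntil y hy).support) :
    p.support.idxOf y ≤ p.support.idxOf z := by
  have hyp : p.support.idxOf y ≤ p.length := by
    have := List.idxOf_lt_length_iff.2 hy
    rw [length_support] at this
    omega
  rw [dropUntil_eq_drop, support_copy, drop_support_eq_support_drop_min, min_eq_left hyp] at hz
  by_contra! h
  exact List.disjoint_take_drop hp.support_nodup le_rfl
    ((List.mem_take_iff_idxOf_lt (List.mem_of_mem_drop hz)).2 h) hz

def replaceSegment {u v x y : V} (p : G.Walk u v) (hx : x ∈ p.support) (hy : y ∈ p.support)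
    (q : G.Walk x y) : G.Walk u v :=
  (p.takeUntil x hx).append (q.append (p.dropUntil y hy))

section replaceSegment

variable {u v x y z : V} {p : G.Walk u v} {hx : x ∈ p.support} {hy : y ∈ p.support}
  {q : G.Walk x y}

lemma IsPath.mem_support_of_mem_support_replaceSegment (hp : p.IsPath)
    (hz : z ∈ (p.replaceSegment hx hy q).support) :
    (z ∈ p.support ∧ (p.support.idxOf z ≤ p.support.idxOf x ∨
      p.support.idxOf y ≤ p.support.idxOf z)) ∨ (z ∈ q.support ∧ z ≠ x ∧ z ≠ y) := by
  simp only [replaceSegment, mem_support_append_iff] at hz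
  rcases hz with hzt | hzq | hzd
  · exact .inl ⟨p.support_takeUntil_subset_support hx hzt,
      .inl (p.idxOf_le_of_mem_support_takeUntil hx hzt)⟩
  · by_cases hzx : z = x
    · exact .inl ⟨hzx ▸ hx, .inl (hzx ▸ le_rfl)⟩
    by_cases hzy : z = y
    · exact .inl ⟨hzy ▸ hy, .inr (hzy ▸ le_rfl)⟩
    exact .inr ⟨hzq, hzx, hzy⟩
  · exact .inl ⟨p.support_dropUntil_subset_support hy hzd,
      .inr (hp.idxOf_le_of_mem_support_dropUntil hy hzd)⟩

lemma IsPath.replaceSegment (hp : p.IsPath) (hq : q.IsPath)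
    (hxy : p.support.idxOf x < p.support.idxOf y)
    (hqp : ∀ z ∈ q.support, z ∈ p.support → z = x ∨ z = y) :
    (p.replaceSegment hx hy q).IsPath := by
  have hqd : (q.append (p.dropUntil y hy)).IsPath := by
    refine hq.append_of_mem_support (hp.dropUntil hy) fun z hzq hzd => ?_
    have := hp.idxOf_le_of_mem_support_dropUntil hy hzd
    rcases hqp z hzq (p.support_dropUntil_subset_support hy hzd) with rfl | rfl
    · omega
    · rfl
  refine (hp.takeUntil hx).append_of_mem_support hqd fun z hzt hz => ?_
  have := p.idxOf_le_of_mem_support_takeUntil hx hzt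
  rcases (mem_support_append_iff _ _).1 hz with hzq | hzd
  · rcases hqp z hzq (p.support_takeUntil_subset_support hx hzt) with rfl | rfl
    · rfl
    · omega
  · have := hp.idxOf_le_of_mem_support_dropUntil hy hzd
    omega

lemma two_le_length_replaceSegment (hxy : x ≠ y) (hq : s(u, v) ∉ q.edges) :
    2 ≤ (p.replaceSegment hx hy q).length := by
  simp only [replaceSegment, length_append]
  by_contra! h
  have hq0 : q.length ≠ 0 := fun h0 => hxy (eq_of_length_eq_zero h0)
  obtain rfl : u = x := eq_of_length_eq_zero (by omega : (p.takeUntil x hx).length = 0)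
  obtain rfl : y = v := eq_of_length_eq_zero (by omega : (p.dropUntil y hy).length = 0)
  exact hq (mk_mem_edges_of_length_eq_one (by omega))

end replaceSegment

end SimpleGraph.Walk

namespace SimpleGraph.ConnectedComponent

variable {V : Type*} {G : SimpleGraph V} {s t : Set V}

lemma reachable_induce_of_image_val_supp_subset (C : (G.induce s).ConnectedComponent)
    (hC : Subtype.val '' C.supp ⊆ t) {u v : V} (hu : u ∈ Subtype.val '' C.supp)
    (hv : v ∈ Subtype.val '' C.supp) :
    (G.induce t).Reachable ⟨u, hC hu⟩ ⟨v, hC hv⟩ := by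
  classical
  obtain ⟨u, hu, rfl⟩ := hu
  obtain ⟨v, hv, rfl⟩ := hv
  obtain ⟨W⟩ := C.reachable_of_mem_supp hu hv
  have hWt : ∀ z ∈ (W.map (Embedding.induce s).toHom).support, z ∈ t := by
    simp only [Walk.support_map, List.mem_map]
    rintro _ ⟨w, hw, rfl⟩
    exact hC ⟨w, (ConnectedComponent.sound (W.takeUntil w hw).reachable).symm.trans hu, rfl⟩
  exact ((W.map (Embedding.induce s).toHom).induce t hWt).reachable

lemma exists_ncard_image_val_supp_lt [Finite V] (C : (G.induce s).ConnectedComponent)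
    (hC : Subtype.val '' C.supp ⊆ t) {a u : V} (ha : a ∈ t) (haC : a ∉ Subtype.val '' C.supp)
    (hu : u ∈ Subtype.val '' C.supp) (hua : G.Adj u a) :
    ∃ C' : (G.induce t).ConnectedComponent,
      (Subtype.val '' C.supp).ncard < (Subtype.val '' C'.supp).ncard := by
  refine ⟨(G.induce t).connectedComponentMk ⟨a, ha⟩, ?_⟩
  have hua' : (G.induce t).Adj ⟨u, hC hu⟩ ⟨a, ha⟩ := hua
  have hsub : insert a (Subtype.val '' C.supp) ⊆
      Subtype.val '' ((G.induce t).connectedComponentMk ⟨a, ha⟩).supp := by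
    rintro z (rfl | hz)
    · exact ⟨⟨z, ha⟩, rfl, rfl⟩
    · refine ⟨⟨z, hC hz⟩, ConnectedComponent.sound ?_, rfl⟩
      exact (C.reachable_induce_of_image_val_supp_subset hC hz hu).trans hua'.reachable
  calc (Subtype.val '' C.supp).ncard < (insert a (Subtype.val '' C.supp)).ncard := by
        rw [Set.ncard_insert_of_notMem haC]; omega
    _ ≤ _ := Set.ncard_le_ncard hsub

end SimpleGraph.ConnectedComponent

theorem exists_component_ncard_gt_of_replaceSegment {V : Type} [Finite V] [DecidableEq V]
    {G : SimpleGraph V} {VC : Set V} {v1 vc x y a : V} {P : G.Walk v1 vc} (hP : P.IsPath)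
    (hPC : ∀ z ∈ P.support, z ≠ v1 → z ≠ vc → z ∉ VC)
    (M : (G.induce (VC ∪ {z | z ∈ P.support})ᶜ).ConnectedComponent)
    (hx : x ∈ P.support) (hy : y ∈ P.support) {Q : G.Walk x y}
    (hQ : ∀ w ∈ Q.support, w ≠ x → w ≠ y → w ∉ VC ∪ {z | z ∈ P.support} ∪ Subtype.val '' M.supp)
    (ha : a ∈ ({z | z ∈ P.support} \ {v1, vc}) ∩ nbhd G (Subtype.val '' M.supp))
    (hxa : P.support.idxOf x < P.support.idxOf a) (hay : P.support.idxOf a < P.support.idxOf y) :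
    ∃ M' : (G.induce (VC ∪ {z | z ∈ (P.replaceSegment hx hy Q).support})ᶜ).ConnectedComponent,
      (Subtype.val '' M.supp).ncard < (Subtype.val '' M'.supp).ncard := by
  obtain ⟨⟨haP, ha_ne⟩, haM, u, huM, hua⟩ := ha
  have hM : Subtype.val '' M.supp ⊆ (VC ∪ {z | z ∈ (P.replaceSegment hx hy Q).support})ᶜ := by
    rintro _ ⟨z, hzM, rfl⟩ (hzC | hz)
    · exact z.2 (.inl hzC)
    rcases hP.mem_support_of_mem_support_replaceSegment hz with ⟨hzP, -⟩ | ⟨hzQ, hzx, hzy⟩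
    · exact z.2 (.inr hzP)
    · exact hQ z hzQ hzx hzy (.inr ⟨z, hzM, rfl⟩)
  refine M.exists_ncard_image_val_supp_lt hM ?_ haM huM hua
  rintro (haC | haP')
  · exact hPC a haP (fun h => ha_ne (.inl h)) (fun h => ha_ne (.inr h)) haC
  rcases hP.mem_support_of_mem_support_replaceSegment haP' with ⟨-, h | h⟩ | ⟨haQ, hax, hay⟩
  · omega
  · omega
  · exact hQ a haQ hax hay (.inl (.inr haP))

theorem stmt17_general {V : Type} [Fintype V] [DecidableEq V]
    (G : SimpleGraph V)
    (VC : Set V) (EC : Set (Sym2 V))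
    (v1 vc : V) (hedge : s(v1, vc) ∈ EC)
    (P' : G.Walk v1 vc) (hP'path : P'.IsPath)
    (hP'int : ∀ y ∈ P'.support, y ≠ v1 → y ≠ vc → y ∉ VC)
    (M : (G.induce (VC ∪ {y | y ∈ P'.support})ᶜ).ConnectedComponent)
    (hmax : ∀ (v1' vc' : V), s(v1', vc') ∈ EC → ∀ P'' : G.Walk v1' vc',
      P''.IsPath → 3 ≤ P''.support.length →
      (∀ y ∈ P''.support, y ≠ v1' → y ≠ vc' → y ∉ VC) →
      VC ∪ {y | y ∈ P''.support} ≠ Set.univ →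
      ∀ M'' : (G.induce (VC ∪ {y | y ∈ P''.support})ᶜ).ConnectedComponent,
        (Subtype.val '' M''.supp).ncard ≤ (Subtype.val '' M.supp).ncard)
    (VM : Set V) (hVM : VM = Subtype.val '' M.supp)
    (A : Set V) (hA : A = ({y | y ∈ P'.support} \ {v1, vc}) ∩ nbhd G VM) :
    ¬ ∃ (x y : V) (Q : G.Walk x y), x ≠ y ∧ x ∈ P'.support ∧ y ∈ P'.support ∧
      Q.IsPath ∧ (∀ e ∈ Q.edges, e ∉ EC) ∧
      (∀ w ∈ Q.support, w ≠ x → w ≠ y → w ∉ VC ∪ {y' | y' ∈ P'.support} ∪ VM) ∧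
      ∃ a ∈ A,
        (P'.support.idxOf x < P'.support.idxOf a ∧
          P'.support.idxOf a < P'.support.idxOf y) ∨
        (P'.support.idxOf y < P'.support.idxOf a ∧
          P'.support.idxOf a < P'.support.idxOf x) := by
  rintro ⟨x, y, Q, hxy, hx, hy, hQ, hQEC, hQint, a, haA, hxay⟩
  subst hVM hA
  wlog hxay' : P'.support.idxOf x < P'.support.idxOf a ∧ P'.support.idxOf a < P'.support.idxOf y
    generalizing x y Q
  · exact this y x Q.reverse hxy.symm hy hx hQ.reverse (by simpa using hQEC) hxay.symm
      (fun w hw hwy hwx => hQint w (by simpa using hw) hwx hwy) (hxay.resolve_left hxay')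
  set P'' := P'.replaceSegment hx hy Q
  have hP'' : P''.IsPath := hP'path.replaceSegment hQ (by omega) fun z hzQ hzP' => by
    by_contra! h
    exact hQint z hzQ h.1 h.2 (.inl (.inr hzP'))
  have hlen : 3 ≤ P''.support.length := by
    have : 2 ≤ P''.length := Walk.two_le_length_replaceSegment hxy fun h => hQEC _ h hedge
    rw [Walk.length_support]; omega
  have hint : ∀ z ∈ P''.support, z ≠ v1 → z ≠ vc → z ∉ VC := by
    intro z hz hz1 hzc
    rcases hP'path.mem_support_of_mem_support_replaceSegment hz with ⟨hzP', -⟩ | ⟨hzQ, hzx, hzy⟩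
    · exact hP'int z hzP' hz1 hzc
    · exact fun h => hQint z hzQ hzx hzy (.inl (.inl h))
  obtain ⟨M'', hM''⟩ := exists_component_ncard_gt_of_replaceSegment hP'path hP'int M hx hy hQint
    haA hxay'.1 hxay'.2
  have hne : VC ∪ {z | z ∈ P''.support} ≠ Set.univ := fun h => by
    obtain ⟨z, -⟩ := M''.nonempty_supp
    exact z.2 (Set.eq_univ_iff_forall.1 h z)
  exact (hmax v1 vc hedge P'' hP'' hlen hint hne M'').not_gt hM''

/-- in the wheel setup (G 2-connected with no k-wheel minor, C a cycle or
edge with at most k−1 vertices, P′ a v₁–v_c path internally disjoint from C with at least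
3 vertices not covering G, chosen to maximize the largest component M of
G − (V(C) ∪ V(P′))), there is no path Q in G − E(C) between two distinct vertices x, y of
P′, internally disjoint from V(C) ∪ V(P′) ∪ V(M), such that some vertex of
A = V(P′ − {v₁,v_c}) ∩ N_G(V(M)) lies strictly between x and y on P′. -/
theorem stmt17 (k : ℕ) (hk : 3 ≤ k) {V : Type} [Fintype V] [DecidableEq V]
    (G : SimpleGraph V)
    (h2conn : G.Connected ∧ ∀ x : V, (G.induce {u | u ≠ x}).Connected)
    (hG : ¬ IsMinorOf (addApex (cycleGraph k)) G)
    (VC : Set V) (EC : Set (Sym2 V))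
    (hC : (∃ u w, G.Adj u w ∧ VC = {u, w} ∧ EC = {s(u, w)}) ∨
      ∃ (x : V) (wlk : G.Walk x x), wlk.IsCycle ∧ wlk.length ≤ k - 1 ∧
        VC = {y | y ∈ wlk.support} ∧ EC = {e | e ∈ wlk.edges})
    (v1 vc : V) (hedge : s(v1, vc) ∈ EC)
    (P' : G.Walk v1 vc) (hP'path : P'.IsPath) (hP'len : 3 ≤ P'.support.length)
    (hP'int : ∀ y ∈ P'.support, y ≠ v1 → y ≠ vc → y ∉ VC)
    (hP'ne : VC ∪ {y | y ∈ P'.support} ≠ Set.univ)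
    (M : (G.induce (VC ∪ {y | y ∈ P'.support})ᶜ).ConnectedComponent)
    (hmax : ∀ (v1' vc' : V), s(v1', vc') ∈ EC → ∀ P'' : G.Walk v1' vc',
      P''.IsPath → 3 ≤ P''.support.length →
      (∀ y ∈ P''.support, y ≠ v1' → y ≠ vc' → y ∉ VC) →
      VC ∪ {y | y ∈ P''.support} ≠ Set.univ →
      ∀ M'' : (G.induce (VC ∪ {y | y ∈ P''.support})ᶜ).ConnectedComponent,
        (Subtype.val '' M''.supp).ncard ≤ (Subtype.val '' M.supp).ncard)
    (VM : Set V) (hVM : VM = Subtype.val '' M.supp)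
    (A : Set V) (hA : A = ({y | y ∈ P'.support} \ {v1, vc}) ∩ nbhd G VM) :
    ¬ ∃ (x y : V) (Q : G.Walk x y), x ≠ y ∧ x ∈ P'.support ∧ y ∈ P'.support ∧
      Q.IsPath ∧ (∀ e ∈ Q.edges, e ∉ EC) ∧
      (∀ w ∈ Q.support, w ≠ x → w ≠ y → w ∉ VC ∪ {y' | y' ∈ P'.support} ∪ VM) ∧
      ∃ a ∈ A,
        (P'.support.idxOf x < P'.support.idxOf a ∧
          P'.support.idxOf a < P'.support.idxOf y) ∨
        (P'.support.idxOf y < P'.support.idxOf a ∧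
          P'.support.idxOf a < P'.support.idxOf x) :=
  stmt17_general G VC EC v1 vc hedge P' hP'path hP'int M hmax VM hVM A hA
end

section
/- In the setup of the wheel proof (G 2-connected without k-wheel minor; C a cycle or edge with at most k−1 vertices; P′ a v_1–v_c path internally disjoint from C maximizing the largest component M of G − (V(C) ∪ V(P′)); A = V(P′ − {v_1,v_c}) ∩ N_G(V(M)); bad vertices are r ∈ V(C) for which there is a jump from r, avoiding M, to a vertex of A other than the two extreme vertices a, a′ of A): if r ∈ V(C) is bad and r′ is a neighbor of r on C, then no jump avoiding M starts at r′; in particular no two bad vertices are adjacent on C. -/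
open SimpleGraph

/-! If `r` is bad, it has a jump avoiding `M` to some `x ∈ A` strictly between `a` and `a'` along
`P'`. A jump avoiding `M` from a neighbour `r'` of `r` to `y ∈ A`, followed backwards and joined to
the first one by the segment of `P'` between `x` and `y`, gives an `r`–`r'` path internally
disjoint from `C` that misses `M` and one of `a`, `a'`. That vertex lies in `N(M) \ C`, so `M`
grows by it in `G - (C ∪ path)`, contradicting the maximality of `M`. -/

namespace SimpleGraph

variable {V : Type} {G : SimpleGraph V}

namespace Walk

section IdxOf

variable [DecidableEq V]

theorem idxOf_start_support {u v : V} (p : G.Walk u v) : p.support.idxOf u = 0 := by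
  rw [← p.cons_tail_support, List.idxOf_cons_self]

theorem IsPath.exists_walk_idxOf_between {u v : V} {p : G.Walk u v} (hp : p.IsPath)
    {x y : V} (hx : x ∈ p.support) (hy : y ∈ p.support)
    (hxy : p.support.idxOf x ≤ p.support.idxOf y) :
    ∃ q : G.Walk x y, ∀ z ∈ q.support, z ∈ p.support ∧
      p.support.idxOf x ≤ p.support.idxOf z ∧ p.support.idxOf z ≤ p.support.idxOf y := by
  induction p generalizing x y with
  | nil =>
    simp only [support_nil, List.mem_singleton] at hx hy
    subst hx hy
    exact ⟨Walk.nil, by simp⟩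
  | @cons u w v h p ih =>
    rw [cons_isPath_iff] at hp
    simp only [support_cons, List.mem_cons] at hx hy hxy ⊢
    by_cases hxu : x = u
    · subst hxu
      by_cases hyu : y = x
      · subst hyu
        exact ⟨Walk.nil, by simp⟩
      · obtain ⟨q, hq⟩ := ih hp.1 p.start_mem_support (hy.resolve_left hyu)
          (p.idxOf_start_support ▸ Nat.zero_le _)
        refine ⟨cons h q, fun z hz => ?_⟩
        rw [support_cons, List.mem_cons] at hz
        rcases hz with rfl | hz
        · simp
        · have := hq z hz
          grind [List.idxOf_cons_ne, List.idxOf_cons_self]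
    · have hx' := hx.resolve_left hxu
      have hyu : y ≠ u := by
        rintro rfl
        simp [List.idxOf_cons_ne _ (Ne.symm hxu)] at hxy
      have hy' := hy.resolve_left hyu
      rw [List.idxOf_cons_ne _ (Ne.symm hxu), List.idxOf_cons_ne _ (Ne.symm hyu)] at hxy
      obtain ⟨q, hq⟩ := ih hp.1 hx' hy' (by omega)
      refine ⟨q, fun z hz => ?_⟩
      have := hq z hz
      have hzu : z ≠ u := fun h => hp.2 (h ▸ this.1)
      grind [List.idxOf_cons_ne]

theorem IsPath.idxOf_le_idxOf_end {u v : V} {p : G.Walk u v} (hp : p.IsPath) {z : V}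
    (hz : z ∈ p.support) : p.support.idxOf z ≤ p.support.idxOf v := by
  induction p with
  | nil => simp_all
  | @cons u w v h p ih =>
    rw [cons_isPath_iff] at hp
    rw [support_cons, List.mem_cons] at hz
    have hvu : v ≠ u := fun h => hp.2 (h ▸ p.end_mem_support)
    rcases hz with rfl | hz
    · simp
    · have hzu : z ≠ u := fun h => hp.2 (h ▸ hz)
      simp only [support_cons, List.idxOf_cons_ne _ (Ne.symm hzu),
        List.idxOf_cons_ne _ (Ne.symm hvu)]
      exact Nat.succ_le_succ (ih hp.1 hz)

theorem IsPath.exists_walk_avoiding_of_idxOf_lt {u v : V} {p : G.Walk u v} (hp : p.IsPath)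
    {a a' x y : V} (ha : a ∈ p.support) (ha' : a' ∈ p.support) (hx : x ∈ p.support)
    (hy : y ∈ p.support) (hau : a ≠ u) (ha'v : a' ≠ v)
    (hax : p.support.idxOf a < p.support.idxOf x) (hxa' : p.support.idxOf x < p.support.idxOf a')
    (hay : p.support.idxOf a ≤ p.support.idxOf y) (hya' : p.support.idxOf y ≤ p.support.idxOf a') :
    ∃ q : G.Walk x y, (∀ z ∈ q.support, z ∈ p.support ∧ z ≠ u ∧ z ≠ v) ∧
      (a ∉ q.support ∨ a' ∉ q.support) := by
  have hu := p.idxOf_start_support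
  have hidx_inj : ∀ {z w}, z ∈ p.support → p.support.idxOf z = p.support.idxOf w → z = w :=
    fun hz h => (List.idxOf_inj hz).1 h
  have ha0 : p.support.idxOf a ≠ 0 := fun h => hau (hidx_inj ha (h.trans hu.symm))
  have ha'v_lt : p.support.idxOf a' < p.support.idxOf v :=
    lt_of_le_of_ne (hp.idxOf_le_idxOf_end ha') fun h => ha'v (hidx_inj ha' h)
  rcases le_or_gt (p.support.idxOf x) (p.support.idxOf y) with hxy | hyx
  · obtain ⟨q, hq⟩ := hp.exists_walk_idxOf_between hx hy hxy
    refine ⟨q, fun z hz => ?_, Or.inl fun haq => ?_⟩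
    · obtain ⟨hzp, hxz, hzy⟩ := hq z hz
      refine ⟨hzp, ?_, ?_⟩ <;> rintro rfl <;> omega
    · have := (hq a haq).2.1
      omega
  · obtain ⟨q, hq⟩ := hp.exists_walk_idxOf_between hy hx hyx.le
    refine ⟨q.reverse, fun z hz => ?_, Or.inr fun ha'q => ?_⟩
    · rw [support_reverse, List.mem_reverse] at hz
      obtain ⟨hzp, hyz, hzx⟩ := hq z hz
      refine ⟨hzp, ?_, ?_⟩ <;> rintro rfl <;> omega
    · rw [support_reverse, List.mem_reverse] at ha'q
      have := (hq a' ha'q).2.2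
      omega

end IdxOf

theorem two_le_length_of_notMem_edges {u v : V} (p : G.Walk u v) (huv : u ≠ v)
    (h : s(u, v) ∉ p.edges) : 2 ≤ p.length := by
  cases p with
  | nil => exact absurd rfl huv
  | cons _ q =>
    cases q with
    | nil => simp at h
    | cons _ _ => simp

theorem mk_notMem_edges_append {u v w : V} (p : G.Walk u w) (q : G.Walk w v)
    (hv : v ∉ p.support) (hu : u ∉ q.support) : s(u, v) ∉ (p.append q).edges := by
  rw [edges_append, List.mem_append, not_or]
  exact ⟨fun h => hv (p.snd_mem_support_of_mem_edges h),
    fun h => hu (q.fst_mem_support_of_mem_edges h)⟩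

end Walk

namespace ConnectedComponent

theorem reachable_induce_of_image_supp_subset {T S : Set V}
    {M : (G.induce T).ConnectedComponent} (hMS : Subtype.val '' M.supp ⊆ S)
    {u v : T} (hu : u ∈ M.supp) (hv : v ∈ M.supp) :
    (G.induce S).Reachable ⟨u, hMS ⟨u, hu, rfl⟩⟩ ⟨v, hMS ⟨v, hv, rfl⟩⟩ :=
  (M.reachable_toSimpleGraph hu hv).map (G' := G.induce S)
    { toFun := fun w => ⟨w.1.1, hMS ⟨w.1, w.2, rfl⟩⟩, map_rel' := id }

theorem exists_ncard_lt_of_mem_nbhd [Finite V] {T S : Set V}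
    (M : (G.induce T).ConnectedComponent) (hMS : Subtype.val '' M.supp ⊆ S)
    {b : V} (hb : b ∈ S) (hbM : b ∈ nbhd G (Subtype.val '' M.supp)) :
    ∃ M' : (G.induce S).ConnectedComponent,
      (Subtype.val '' M.supp).ncard < (Subtype.val '' M'.supp).ncard := by
  obtain ⟨hbM, _, ⟨m, hm, rfl⟩, hmb⟩ := hbM
  refine ⟨(G.induce S).connectedComponentMk ⟨b, hb⟩, Set.ncard_lt_ncard ?_⟩
  refine (Set.ssubset_insert hbM).trans_subset (Set.insert_subset ⟨⟨b, hb⟩, rfl, rfl⟩ ?_)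
  rintro _ ⟨u, hu, rfl⟩
  refine ⟨⟨u, hMS ⟨u, hu, rfl⟩⟩, ?_, rfl⟩
  exact ConnectedComponent.sound
    ((reachable_induce_of_image_supp_subset hMS hu hm).trans (Adj.reachable hmb))

end ConnectedComponent
end SimpleGraph

section WheelSetup

variable {V : Type} {G : SimpleGraph V}

theorem adj_and_mem_of_mem_cycleEdges {VC : Set V} {EC : Set (Sym2 V)}
    (hC : (∃ u w, G.Adj u w ∧ VC = {u, w} ∧ EC = {s(u, w)}) ∨
      ∃ (x : V) (wlk : G.Walk x x), VC = {y | y ∈ wlk.support} ∧ EC = {e | e ∈ wlk.edges})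
    {p q : V} (hpq : s(p, q) ∈ EC) : G.Adj p q ∧ p ∈ VC ∧ q ∈ VC := by
  rcases hC with ⟨u, w, huw, rfl, rfl⟩ | ⟨x, wlk, rfl, rfl⟩
  · rcases Sym2.eq_iff.1 (Set.mem_singleton_iff.1 hpq) with ⟨rfl, rfl⟩ | ⟨rfl, rfl⟩
    · exact ⟨huw, by simp, by simp⟩
    · exact ⟨huw.symm, by simp, by simp⟩
  · exact ⟨wlk.adj_of_mem_edges hpq, wlk.fst_mem_support_of_mem_edges hpq,
      wlk.snd_mem_support_of_mem_edges hpq⟩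

def IsJumpAvoiding (VC A VM : Set V) {r x : V} (Q : G.Walk r x) : Prop :=
  (∀ w ∈ Q.support, w ≠ r → w ≠ x → w ∉ VC ∪ A) ∧ ∀ w ∈ Q.support, w ∉ VM

theorem IsJumpAvoiding.notMem_of_ne_start {VC A VM : Set V} {r x : V} {Q : G.Walk r x}
    (hQ : IsJumpAvoiding VC A VM Q) (hx : x ∉ VC) {z : V} (hz : z ∈ Q.support)
    (hzr : z ≠ r) : z ∉ VC ∧ (z ∈ A → z = x) := by
  by_cases hzx : z = x
  · exact ⟨hzx ▸ hx, fun _ => hzx⟩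
  · have := hQ.1 z hz hzr hzx
    exact ⟨fun h => this (Or.inl h), fun h => absurd (Or.inr h) this⟩

theorem mem_support_nbhd_of_mem_inter {VC VM A : Set V} {v1 vc : V} {P' : G.Walk v1 vc}
    (hP'int : ∀ y ∈ P'.support, y ≠ v1 → y ≠ vc → y ∉ VC)
    (hA : A = ({y | y ∈ P'.support} \ {v1, vc}) ∩ nbhd G VM) {b : V} (hb : b ∈ A) :
    b ∈ P'.support ∧ b ≠ v1 ∧ b ≠ vc ∧ b ∉ VC ∧ b ∈ nbhd G VM := by
  rw [hA] at hb
  obtain ⟨⟨hbP, hbends⟩, hbM⟩ := hb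
  simp only [Set.mem_insert_iff, Set.mem_singleton_iff, not_or] at hbends
  exact ⟨hbP, hbends.1, hbends.2, hP'int b hbP hbends.1 hbends.2, hbM⟩

theorem exists_detour_of_jumps [DecidableEq V] {VC VM A : Set V} {v1 vc : V}
    {P' : G.Walk v1 vc} (hP'path : P'.IsPath)
    (hP'int : ∀ y ∈ P'.support, y ≠ v1 → y ≠ vc → y ∉ VC)
    (hP'M : ∀ y ∈ P'.support, y ∉ VM)
    (hA : A = ({y | y ∈ P'.support} \ {v1, vc}) ∩ nbhd G VM)
    {a a' : V} (haA : a ∈ A) (ha'A : a' ∈ A)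
    (hafirst : ∀ b ∈ A, P'.support.idxOf a ≤ P'.support.idxOf b)
    (ha'last : ∀ b ∈ A, P'.support.idxOf b ≤ P'.support.idxOf a')
    {r r' x y : V} (hr : r ∈ VC) (hr' : r' ∈ VC) (hrr' : r ≠ r')
    (hxA : x ∈ A) (hx : x ∉ ({a, a'} : Set V)) (hyA : y ∈ A)
    (J : G.Walk r x) (hJ : IsJumpAvoiding VC A VM J)
    (J' : G.Walk r' y) (hJ' : IsJumpAvoiding VC A VM J') :
    ∃ (W : G.Walk r r') (b : V), s(r, r') ∉ W.edges ∧
      (∀ z ∈ W.support, z ≠ r → z ≠ r' → z ∉ VC) ∧ (∀ z ∈ W.support, z ∉ VM) ∧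
      b ∉ VC ∧ b ∉ W.support ∧ b ∈ nbhd G VM := by
  have hAfacts : ∀ b ∈ A, b ∈ P'.support ∧ b ≠ v1 ∧ b ≠ vc ∧ b ∉ VC ∧ b ∈ nbhd G VM :=
    fun b => mem_support_nbhd_of_mem_inter hP'int hA
  obtain ⟨hxP, -, -, hxC, -⟩ := hAfacts x hxA
  obtain ⟨hyP, -, -, hyC, -⟩ := hAfacts y hyA
  obtain ⟨haP, hav1, -, -, -⟩ := hAfacts a haA
  obtain ⟨ha'P, -, ha'vc, -, -⟩ := hAfacts a' ha'A
  obtain ⟨seg, hseg, haa'⟩ := hP'path.exists_walk_avoiding_of_idxOf_lt haP ha'P hxP hyP hav1 ha'vc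
    (lt_of_le_of_ne (hafirst x hxA) fun h => hx (Or.inl ((List.idxOf_inj haP).1 h).symm))
    (lt_of_le_of_ne (ha'last x hxA) fun h => hx (Or.inr ((List.idxOf_inj hxP).1 h)))
    (hafirst y hyA) (ha'last y hyA)
  obtain ⟨b, hbA, hbseg⟩ : ∃ b ∈ A, b ∉ seg.support :=
    haa'.elim (⟨a, haA, ·⟩) (⟨a', ha'A, ·⟩)
  obtain ⟨-, -, -, hbC, hbM⟩ := hAfacts b hbA
  set K := seg.append J'.reverse
  have hK : ∀ z ∈ K.support, z ∈ seg.support ∨ z ∈ J'.support := by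
    simp [K, Walk.mem_support_append_iff, Walk.support_reverse]
  have hJC : ∀ z ∈ J.support, z ≠ r → z ∉ VC := fun z hz hzr =>
    (hJ.notMem_of_ne_start hxC hz hzr).1
  have hKC : ∀ z ∈ K.support, z ≠ r' → z ∉ VC := by
    intro z hz hzr'
    rcases hK z hz with h | h
    · exact hP'int z (hseg z h).1 (hseg z h).2.1 (hseg z h).2.2
    · exact (hJ'.notMem_of_ne_start hyC h hzr').1
  refine ⟨J.append K, b, J.mk_notMem_edges_append K (fun h => hJC r' h hrr'.symm hr')
    (fun h => hKC r h hrr' hr), ?_, ?_, hbC, ?_, hbM⟩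
  · intro z hz hzr hzr'
    rcases (J.mem_support_append_iff K).1 hz with h | h
    exacts [hJC z h hzr, hKC z h hzr']
  · intro z hz
    rcases (J.mem_support_append_iff K).1 hz with h | h
    · exact hJ.2 z h
    rcases hK z h with h | h
    exacts [hP'M z (hseg z h).1, hJ'.2 z h]
  · intro hbW
    have hbr : ∀ {s}, s ∈ VC → b ≠ s := fun hs h => hbC (h ▸ hs)
    rcases (J.mem_support_append_iff K).1 hbW with h | h
    · exact hbseg ((hJ.notMem_of_ne_start hxC h (hbr hr)).2 hbA ▸ seg.start_mem_support)
    rcases hK b h with h | h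
    · exact hbseg h
    · exact hbseg ((hJ'.notMem_of_ne_start hyC h (hbr hr')).2 hbA ▸ seg.end_mem_support)

theorem false_of_detour [Finite V] [DecidableEq V] {T VC : Set V} {EC : Set (Sym2 V)}
    (hVCT : VC ⊆ T) {M : (G.induce Tᶜ).ConnectedComponent}
    (hmax : ∀ (v1' vc' : V), s(v1', vc') ∈ EC → ∀ P'' : G.Walk v1' vc',
      P''.IsPath → 3 ≤ P''.support.length →
      (∀ y ∈ P''.support, y ≠ v1' → y ≠ vc' → y ∉ VC) →
      VC ∪ {y | y ∈ P''.support} ≠ Set.univ →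
      ∀ M'' : (G.induce (VC ∪ {y | y ∈ P''.support})ᶜ).ConnectedComponent,
        (Subtype.val '' M''.supp).ncard ≤ (Subtype.val '' M.supp).ncard)
    {r r' : V} (hrr' : s(r, r') ∈ EC) (hne : r ≠ r') (W : G.Walk r r')
    (hWr : s(r, r') ∉ W.edges) (hWC : ∀ z ∈ W.support, z ≠ r → z ≠ r' → z ∉ VC)
    (hWM : ∀ z ∈ W.support, z ∉ Subtype.val '' M.supp) {b : V} (hbC : b ∉ VC)
    (hbW : b ∉ W.support) (hbM : b ∈ nbhd G (Subtype.val '' M.supp)) : False := by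
  set P := W.bypass
  have hPW : ∀ z ∈ P.support, z ∈ W.support := fun z hz => W.support_bypass_subset_support hz
  have hlen : 3 ≤ P.support.length := by
    have := P.two_le_length_of_notMem_edges hne fun h => hWr (W.edges_bypass_subset_edges h)
    rw [Walk.length_support]
    omega
  have hMS : Subtype.val '' M.supp ⊆ (VC ∪ {z | z ∈ P.support})ᶜ := by
    rintro _ ⟨m, hm, rfl⟩ (h | h)
    · exact m.2 (hVCT h)
    · exact hWM _ (hPW _ h) ⟨m, hm, rfl⟩
  have hbS : b ∈ (VC ∪ {z | z ∈ P.support})ᶜ := by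
    rintro (h | h)
    exacts [hbC h, hbW (hPW _ h)]
  obtain ⟨M'', hlt⟩ := M.exists_ncard_lt_of_mem_nbhd hMS hbS hbM
  exact (hmax r r' hrr' P W.bypass_isPath hlen (fun z hz => hWC z (hPW z hz))
    (fun h => hbS (h ▸ Set.mem_univ b)) M'').not_gt hlt

end WheelSetup

theorem stmt18_general (k : ℕ) {V : Type} [Fintype V] [DecidableEq V]
    (G : SimpleGraph V)
    (VC : Set V) (EC : Set (Sym2 V))
    (hC : (∃ u w, G.Adj u w ∧ VC = {u, w} ∧ EC = {s(u, w)}) ∨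
      ∃ (x : V) (wlk : G.Walk x x), wlk.IsCycle ∧ wlk.length ≤ k - 1 ∧
        VC = {y | y ∈ wlk.support} ∧ EC = {e | e ∈ wlk.edges})
    (v1 vc : V)
    (P' : G.Walk v1 vc) (hP'path : P'.IsPath)
    (hP'int : ∀ y ∈ P'.support, y ≠ v1 → y ≠ vc → y ∉ VC)
    (M : (G.induce (VC ∪ {y | y ∈ P'.support})ᶜ).ConnectedComponent)
    (hmax : ∀ (v1' vc' : V), s(v1', vc') ∈ EC → ∀ P'' : G.Walk v1' vc',
      P''.IsPath → 3 ≤ P''.support.length →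
      (∀ y ∈ P''.support, y ≠ v1' → y ≠ vc' → y ∉ VC) →
      VC ∪ {y | y ∈ P''.support} ≠ Set.univ →
      ∀ M'' : (G.induce (VC ∪ {y | y ∈ P''.support})ᶜ).ConnectedComponent,
        (Subtype.val '' M''.supp).ncard ≤ (Subtype.val '' M.supp).ncard)
    (VM : Set V) (hVM : VM = Subtype.val '' M.supp)
    (A : Set V) (hA : A = ({y | y ∈ P'.support} \ {v1, vc}) ∩ nbhd G VM)
    (a a' : V) (haA : a ∈ A) (ha'A : a' ∈ A)
    (hafirst : ∀ b ∈ A, P'.support.idxOf a ≤ P'.support.idxOf b)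
    (ha'last : ∀ b ∈ A, P'.support.idxOf b ≤ P'.support.idxOf a')
    (Jump : V → V → Prop)
    (hJump : ∀ r x, Jump r x ↔ x ∈ A ∧ ∃ Q : G.Walk r x, Q.IsPath ∧
      (∀ w ∈ Q.support, w ≠ r → w ≠ x → w ∉ VC ∪ A) ∧
      (∀ w ∈ Q.support, w ∉ VM))
    (bad : V → Prop)
    (hbad : ∀ r, bad r ↔ r ∈ VC ∧ ¬ {x | Jump r x} ⊆ {a, a'}) :
    (∀ r r' : V, bad r → s(r, r') ∈ EC → ∀ x, ¬ Jump r' x) ∧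
    (∀ r r' : V, bad r → bad r' → s(r, r') ∉ EC) := by
  subst hVM
  have hP'M : ∀ y ∈ P'.support, y ∉ Subtype.val '' M.supp := by
    rintro y hy ⟨m, -, rfl⟩
    exact m.2 (Or.inr hy)
  have no_jump : ∀ r r' : V, bad r → s(r, r') ∈ EC → ∀ y, ¬ Jump r' y := by
    intro r r' hr hrr' y hy
    obtain ⟨x, hx, hxaa'⟩ := Set.not_subset.1 ((hbad r).1 hr).2
    obtain ⟨hxA, J, -, hJ⟩ := (hJump r x).1 hx
    obtain ⟨hyA, J', -, hJ'⟩ := (hJump r' y).1 hy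
    obtain ⟨hadj, hrC, hr'C⟩ :=
      adj_and_mem_of_mem_cycleEdges (hC.imp id fun ⟨x, w, _, _, h⟩ => ⟨x, w, h⟩) hrr'
    obtain ⟨W, b, hWr, hWC, hWM, hbC, hbW, hbM⟩ := exists_detour_of_jumps hP'path hP'int hP'M
      hA haA ha'A hafirst ha'last hrC hr'C hadj.ne hxA hxaa' hyA J hJ J' hJ'
    exact false_of_detour Set.subset_union_left hmax hrr' hadj.ne W hWr hWC hWM hbC hbW hbM
  refine ⟨no_jump, fun r r' hr hr' hrr' => ?_⟩
  obtain ⟨x, hx, -⟩ := Set.not_subset.1 ((hbad r').1 hr').2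
  exact no_jump r r' hr hrr' x hx

/-- in the wheel setup, with `A = V(P′ − {v₁,v_c}) ∩ N_G(V(M))`, `a` and `a′`
the vertices of `A` closest along `P′` to `v₁` and `v_c`, jumps being paths from `V(C)` to
`A` internally disjoint from `V(C) ∪ A`, and a vertex `r ∈ V(C)` bad when some jump from
`r` avoiding `M` ends in `A − {a, a′}`: if `r` is bad and `r′` is a neighbour of `r` on
`C`, then no jump avoiding `M` starts at `r′`; in particular no two bad vertices are
adjacent on `C`. -/
theorem stmt18 (k : ℕ) (hk : 3 ≤ k) {V : Type} [Fintype V] [DecidableEq V]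
    (G : SimpleGraph V)
    (h2conn : G.Connected ∧ ∀ x : V, (G.induce {u | u ≠ x}).Connected)
    (hG : ¬ IsMinorOf (addApex (cycleGraph k)) G)
    (VC : Set V) (EC : Set (Sym2 V))
    (hC : (∃ u w, G.Adj u w ∧ VC = {u, w} ∧ EC = {s(u, w)}) ∨
      ∃ (x : V) (wlk : G.Walk x x), wlk.IsCycle ∧ wlk.length ≤ k - 1 ∧
        VC = {y | y ∈ wlk.support} ∧ EC = {e | e ∈ wlk.edges})
    (v1 vc : V) (hedge : s(v1, vc) ∈ EC)
    (P' : G.Walk v1 vc) (hP'path : P'.IsPath) (hP'len : 3 ≤ P'.support.length)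
    (hP'int : ∀ y ∈ P'.support, y ≠ v1 → y ≠ vc → y ∉ VC)
    (hP'ne : VC ∪ {y | y ∈ P'.support} ≠ Set.univ)
    (M : (G.induce (VC ∪ {y | y ∈ P'.support})ᶜ).ConnectedComponent)
    (hmax : ∀ (v1' vc' : V), s(v1', vc') ∈ EC → ∀ P'' : G.Walk v1' vc',
      P''.IsPath → 3 ≤ P''.support.length →
      (∀ y ∈ P''.support, y ≠ v1' → y ≠ vc' → y ∉ VC) →
      VC ∪ {y | y ∈ P''.support} ≠ Set.univ →
      ∀ M'' : (G.induce (VC ∪ {y | y ∈ P''.support})ᶜ).ConnectedComponent,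
        (Subtype.val '' M''.supp).ncard ≤ (Subtype.val '' M.supp).ncard)
    (VM : Set V) (hVM : VM = Subtype.val '' M.supp)
    (A : Set V) (hA : A = ({y | y ∈ P'.support} \ {v1, vc}) ∩ nbhd G VM)
    (a a' : V) (haA : a ∈ A) (ha'A : a' ∈ A)
    (hafirst : ∀ b ∈ A, P'.support.idxOf a ≤ P'.support.idxOf b)
    (ha'last : ∀ b ∈ A, P'.support.idxOf b ≤ P'.support.idxOf a')
    (Jump : V → V → Prop)
    (hJump : ∀ r x, Jump r x ↔ x ∈ A ∧ ∃ Q : G.Walk r x, Q.IsPath ∧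
      (∀ w ∈ Q.support, w ≠ r → w ≠ x → w ∉ VC ∪ A) ∧
      (∀ w ∈ Q.support, w ∉ VM))
    (bad : V → Prop)
    (hbad : ∀ r, bad r ↔ r ∈ VC ∧ ¬ {x | Jump r x} ⊆ {a, a'}) :
    (∀ r r' : V, bad r → s(r, r') ∈ EC → ∀ x, ¬ Jump r' x) ∧
    (∀ r r' : V, bad r → bad r' → s(r, r') ∉ EC) :=
  stmt18_general k G VC EC hC v1 vc P' hP'path hP'int M hmax VM hVM A hA a a' haA ha'A hafirst
    ha'last Jump hJump bad hbad
end
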